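/- arXiv:2604.10479 — 8 statements merged into one kernel-verified Lean document; each statement's English description precedes it below -/
import Mathlib

section
/- Fix constants c_m ≥ 2 and c_k ≥ c_m + 1. If, in the construction, the k·w polynomials g^{(i,j)} : F_2^{log₂ m} → F_2 are drawn independently and uniformly at random from the set of polynomials of total degree at most ⌈log₂ n⌉, then the probability that the resulting matrix G is a (1 − 1/√⌈log₂ n⌉, ⌊2^w/(⌈log₂ n⌉)^2⌋)-expander tends to 1 as n → ∞. -/
open Finset

/-- Coefficient space for (multilinear representatives of) polynomials over `F_2`
in `d` variables of total degree at most `r`; a uniformly random such coefficient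
vector corresponds to a uniformly random polynomial of total degree at most `r`,
viewed as a function `F_2^d → F_2`. -/
abbrev CoefSp (d r : ℕ) := {S : Finset (Fin d) // S.card ≤ r} → ZMod 2

/-- Evaluation of the polynomial with coefficient vector `c` at the point `p`. -/
def evalC {d r : ℕ} (c : CoefSp d r) (p : Fin d → ZMod 2) : ZMod 2 :=
  ∑ S : {S : Finset (Fin d) // S.card ≤ r}, c S * ∏ i ∈ S.1, p i

/-- Totalization of a doubly indexed family of coefficient vectors. -/
def cExt {d r k w : ℕ} (c : Fin k → Fin w → CoefSp d r) (i t : ℕ) : CoefSp d r :=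
  if h : i < k ∧ t < w then c ⟨i, h.1⟩ ⟨t, h.2⟩ else fun _ => 0

open scoped Classical in
/-- The matrix `G = [M^{(1)} ‖ … ‖ M^{(k)}]`, padded with zero columns up to width
`n`.  Rows are indexed by points `p ∈ F_2^d`; column `j` encodes the pair
`(i, q) = (j / 2^w, bits of j % 2^w)`, and `M^{(i)}_{p, q} = 1` iff
`g^{(i,t)}(p) = q_t` for all `t < w`. -/
noncomputable def Gof (n L k w d : ℕ) (c : Fin k → Fin w → CoefSp d L) :
    (Fin d → ZMod 2) → Fin n → ZMod 2 := fun p j =>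
  if ((j : ℕ) < k * 2 ^ w ∧
      ∀ t < w, evalC (cExt c ((j : ℕ) / 2 ^ w) t) p =
        (if Nat.testBit ((j : ℕ) % 2 ^ w) t then 1 else 0))
  then 1 else 0

/-- Hamming weight of the coordinatewise logical OR of the rows of `G` indexed
by the set `T`. -/
noncomputable def orWeight {ρ ν : Type*} [Fintype ν] (G : ρ → ν → ZMod 2)
    (T : Finset ρ) : ℕ :=
  Nat.card {j : ν // ∃ i ∈ T, G i j ≠ 0}

/-- `G` is a `(γ, t)`-expander: every nonempty set of at most `t` rows has the
Hamming weight of its coordinatewise OR at least `γ·k` times the number of rows. -/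
def IsExpander {ρ ν : Type*} [Fintype ν] (G : ρ → ν → ZMod 2) (γ : ℝ)
    (k t : ℕ) : Prop :=
  ∀ T : Finset ρ, T.Nonempty → T.card ≤ t →
    (γ * k * T.card : ℝ) ≤ (orWeight G T : ℝ)

/-!
For a set `T` of `s ≤ 2^w / L²` rows we have `s ≤ 2^L`, and polynomials of degree `≤ L` over
`F_2` interpolate every function on `2^L` points; so the values of the `k·w` random polynomials on
`T` are independent and uniform, i.e. the `k` blocks restrict to `k` uniform random maps
`T → F_2^w`. The OR of the rows in `T` has weight at least the total size of their images, so `T`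
violates expansion only if these maps lose more than `k s / √L` points to collisions. Encoding a
collision by the earlier point it repeats bounds `E[L^{collisions}]` by `(1 + sL/2^w)^{ks}`, which
by Markov gives a failure probability `exp(s (k/L - k log L / √L))`. Since `k = L^{c_k}` dominates
both `d √L = L^{c_m + 1/2}` and `L^{3/2}`, this beats the `2^{ds}` choices of `T` with room
`e^{-2Ls}` to spare, and the union over all sizes `s` fails with probability at most `e^{-L}`.
-/

open MvPolynomial

lemma zmod_two_pow_eq_self (a : ZMod 2) {e : ℕ} (he : e ≠ 0) : a ^ e = a := by
  fin_cases a
  · exact zero_pow he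
  · exact one_pow e

lemma exists_totalDegree_eq_zero_eval_eq_on {σ R : Type*} [CommSemiring R] [Nonempty (σ → R)]
    {S : Finset (σ → R)} (hS : S.card ≤ 1) (φ : (σ → R) → R) :
    ∃ P : MvPolynomial σ R, P.totalDegree = 0 ∧ ∀ p ∈ S, eval p P = φ p := by
  obtain ⟨x, hx⟩ := Finset.card_le_one_iff_subset_singleton.mp hS
  refine ⟨C (φ x), totalDegree_C _, fun p hp => ?_⟩
  rw [eval_C, Finset.mem_singleton.mp (hx hp)]

lemma exists_card_filter_eq_le {α : Type*} (S : Finset α) (f : α → ZMod 2) {L : ℕ}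
    (hS : S.card ≤ 2 ^ (L + 1)) : ∃ b, #{a ∈ S | f a = b} ≤ 2 ^ L := by
  have hsplit := Finset.card_filter_add_card_filter_not (s := S) (fun a => f a = 0)
  have hne : ∀ x : ZMod 2, ¬x = 0 ↔ x = 1 := by decide
  simp only [hne] at hsplit
  by_contra! h
  have := h 0
  have := h 1
  rw [pow_succ] at hS
  omega

/-- Split `S` according to the last coordinate: the smaller half, of at most `2^L` points, is
matched by the correction term `(X_last - (b + 1)) * H` with `deg H ≤ L`, the other half
by `G`. -/
theorem exists_totalDegree_le_eval_eq_on {d L : ℕ} {S : Finset (Fin d → ZMod 2)}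
    (hS : S.card ≤ 2 ^ L) (φ : (Fin d → ZMod 2) → ZMod 2) :
    ∃ P : MvPolynomial (Fin d) (ZMod 2),
      P.totalDegree ≤ L ∧ ∀ p ∈ S, eval p P = φ p := by
  induction d generalizing L with
  | zero =>
    have hS1 : S.card ≤ 1 := (Finset.card_le_univ S).trans (by simp)
    obtain ⟨P, hP, hPS⟩ := exists_totalDegree_eq_zero_eval_eq_on hS1 φ
    exact ⟨P, by omega, hPS⟩
  | succ d ih =>
    cases L with
    | zero =>
      obtain ⟨P, hP, hPS⟩ := exists_totalDegree_eq_zero_eval_eq_on (by simpa using hS) φ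
      exact ⟨P, hP.le, hPS⟩
    | succ L =>
      obtain ⟨b, hb⟩ := exists_card_filter_eq_le S (fun p => p (Fin.last d)) hS
      obtain ⟨G, hG, hGS⟩ := ih (L := L + 1)
        (S := {p ∈ S | p (Fin.last d) ≠ b}.image Fin.init)
        (Finset.card_image_le.trans ((Finset.card_filter_le _ _).trans hS))
        (fun r => φ (Fin.snoc r (b + 1)))
      obtain ⟨H, hH, hHS⟩ := ih (L := L) (S := {p ∈ S | p (Fin.last d) = b}.image Fin.init)
        (Finset.card_image_le.trans hb) (fun r => φ (Fin.snoc r b) - eval r G)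
      refine ⟨rename Fin.castSucc G + (X (Fin.last d) - C (b + 1)) * rename Fin.castSucc H,
        ?_, fun p hp => ?_⟩
      · have hX : (X (Fin.last d) - C (b + 1) : MvPolynomial (Fin (d + 1)) (ZMod 2)).totalDegree
            ≤ 1 := (totalDegree_sub_C_le _ _).trans (totalDegree_X _).le
        refine (totalDegree_add _ _).trans (max_le ((totalDegree_rename_le _ _).trans hG) ?_)
        refine (totalDegree_mul _ _).trans ?_
        have := totalDegree_rename_le Fin.castSucc H
        omega
      · have hinit : p ∘ Fin.castSucc = Fin.init p := rfl
        simp only [map_add, map_mul, map_sub, eval_X, eval_C, eval_rename, hinit]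
        by_cases hpb : p (Fin.last d) = b
        · have hpS : Fin.init p ∈ {p ∈ S | p (Fin.last d) = b}.image Fin.init :=
            Finset.mem_image_of_mem _ (Finset.mem_filter.mpr ⟨hp, hpb⟩)
          have hcoef : ∀ b : ZMod 2, b - (b + 1) = 1 := by decide
          rw [hHS _ hpS, hpb, hcoef, one_mul, add_sub_cancel, ← hpb, Fin.snoc_init_self]
        · have hpS : Fin.init p ∈ {p ∈ S | p (Fin.last d) ≠ b}.image Fin.init :=
            Finset.mem_image_of_mem _ (Finset.mem_filter.mpr ⟨hp, hpb⟩)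
          have hlast : p (Fin.last d) = b + 1 := by
            have key : ∀ x b : ZMod 2, x ≠ b → x = b + 1 := by decide
            exact key _ _ hpb
          rw [hGS _ hpS, hlast, sub_self, zero_mul, add_zero, ← hlast, Fin.snoc_init_self]

/-- Multilinearisation: over `F_2` every monomial `x^m` agrees with `∏_{i ∈ supp m} x_i`. -/
theorem exists_evalC_eq_eval {d L : ℕ} (P : MvPolynomial (Fin d) (ZMod 2))
    (hP : P.totalDegree ≤ L) : ∃ c : CoefSp d L, ∀ p, evalC c p = eval p P := by
  classical
  refine ⟨fun S => ∑ m ∈ P.support with m.support = S.1, P.coeff m, fun p => ?_⟩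
  have hmaps : ∀ m ∈ P.support,
      m.support ∈ ({A | A.card ≤ L} : Finset (Finset (Fin d))) := by
    intro m hm
    refine Finset.mem_filter.mpr ⟨Finset.mem_univ _, le_trans ?_ ((le_totalDegree hm).trans hP)⟩
    rw [Finset.card_eq_sum_ones, Finsupp.sum]
    exact Finset.sum_le_sum fun i hi => Nat.one_le_iff_ne_zero.mpr (Finsupp.mem_support_iff.mp hi)
  rw [evalC, eval_eq, ← Finset.sum_fiberwise_of_maps_to hmaps,
    Finset.sum_subtype _ (p := fun A : Finset (Fin d) => A.card ≤ L) (fun A => by simp)]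
  refine Finset.sum_congr rfl fun A _ => ?_
  rw [Finset.sum_mul]
  refine Finset.sum_congr rfl fun m hm => ?_
  rw [← (Finset.mem_filter.mp hm).2]
  congr 1
  exact Finset.prod_congr rfl fun i hi =>
    (zmod_two_pow_eq_self _ (Finsupp.mem_support_iff.mp hi)).symm

theorem exists_evalC_eq_on {d L : ℕ} {S : Finset (Fin d → ZMod 2)} (hS : S.card ≤ 2 ^ L)
    (φ : (Fin d → ZMod 2) → ZMod 2) : ∃ c : CoefSp d L, ∀ p ∈ S, evalC c p = φ p := by
  obtain ⟨P, hP, hPS⟩ := exists_totalDegree_le_eval_eq_on hS φ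
  obtain ⟨c, hc⟩ := exists_evalC_eq_eval P hP
  exact ⟨c, fun p hp => (hc p).trans (hPS p hp)⟩

lemma evalC_add {d L : ℕ} (c c' : CoefSp d L) (p : Fin d → ZMod 2) :
    evalC (c + c') p = evalC c p + evalC c' p := by
  simp only [evalC, Pi.add_apply, add_mul, Finset.sum_add_distrib]

theorem card_filter_comp_mul_card_eq {α β : Type*} [AddGroup α] [Fintype α] [AddMonoid β]
    [Fintype β] [DecidableEq β] (f : α →+ β) (hf : Function.Surjective f) (P : β → Prop)
    [DecidablePred P] :
    #{x | P (f x)} * Fintype.card β = #{y | P y} * Fintype.card α := by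
  have hcount : ∀ (Q : β → Prop) [DecidablePred Q],
      #{x | Q (f x)} = #{y | Q y} * #{x | f x = 0} := by
    intro Q _
    rw [Finset.card_eq_sum_card_fiberwise (f := f) (t := {y | Q y}) (fun x hx => by simpa using hx),
      ← smul_eq_mul, ← Finset.sum_const]
    refine Finset.sum_congr rfl fun y hy => ?_
    rw [← AddMonoidHom.card_fiber_eq_of_mem_range f (hf y) (hf 0), Finset.filter_filter]
    congr 1
    ext x
    simp only [Finset.mem_filter, Finset.mem_univ, true_and] at hy ⊢
    exact ⟨fun h => h.2, fun h => ⟨h ▸ hy, h⟩⟩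
  have hα := hcount (fun _ => True)
  simp only [Finset.filter_true, Finset.card_univ] at hα
  rw [hcount P, hα]
  ring

section ImageDefect

def imageDefect {ι V : Type*} [Fintype ι] [DecidableEq V] (g : ι → V) : ℕ :=
  Fintype.card ι - #(univ.image g)

lemma pow_imageDefect_fin_cons {V : Type*} [DecidableEq V] {s : ℕ} (x : ℝ) (v : V)
    (g : Fin s → V) :
    x ^ imageDefect (Fin.cons v g : Fin (s + 1) → V)
      = x ^ imageDefect g * if v ∈ univ.image g then x else 1 := by
  have himage : univ.image (Fin.cons v g : Fin (s + 1) → V) = insert v (univ.image g) := by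
    ext u
    simp [Fin.exists_fin_succ, eq_comm]
  have hle : #(univ.image g) ≤ s := (card_image_le).trans (by simp)
  simp only [imageDefect, himage, Fintype.card_fin]
  split_ifs with hv
  · rw [Finset.insert_eq_of_mem hv, ← pow_succ]
    congr 1
    omega
  · rw [Finset.card_insert_of_notMem hv, mul_one]
    congr 1
    omega

variable {ι κ V : Type*} [Fintype ι] [DecidableEq ι] [Fintype V] [DecidableEq V]

lemma sum_pow_imageDefect_fin_le {x : ℝ} (hx : 0 ≤ x) (s : ℕ) :
    ∑ g : Fin s → V, x ^ imageDefect g ≤ (Fintype.card V + s * x) ^ s := by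
  induction s with
  | zero => simp [imageDefect]
  | succ s ih =>
    have hcount : ∀ g : Fin s → V,
        ∑ v : V, (if v ∈ univ.image g then x else 1) ≤ Fintype.card V + s * x := by
      intro g
      calc ∑ v : V, (if v ∈ univ.image g then x else 1)
          ≤ ∑ v : V, ((if v ∈ univ.image g then x else 0) + 1) :=
            Finset.sum_le_sum fun v _ => by split_ifs <;> linarith
        _ = #(univ.image g) * x + Fintype.card V := by
            rw [Finset.sum_add_distrib, Finset.sum_ite_mem, Finset.univ_inter, Finset.sum_const,
              nsmul_eq_mul, Finset.sum_const, nsmul_one, Finset.card_univ]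
        _ ≤ s * x + Fintype.card V := by
            gcongr
            exact_mod_cast (card_image_le).trans (by simp)
        _ = _ := add_comm _ _
    calc ∑ g : Fin (s + 1) → V, x ^ imageDefect g
        = ∑ g : Fin s → V, ∑ v : V, x ^ imageDefect (Fin.cons v g : Fin (s + 1) → V) := by
          rw [← (Fin.consEquiv fun _ => V).sum_comp, Fintype.sum_prod_type, Finset.sum_comm]
          rfl
      _ ≤ ∑ g : Fin s → V, x ^ imageDefect g * (Fintype.card V + s * x) := by
          refine Finset.sum_le_sum fun g _ => ?_
          simp only [pow_imageDefect_fin_cons, ← Finset.mul_sum]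
          exact mul_le_mul_of_nonneg_left (hcount g) (by positivity)
      _ ≤ (Fintype.card V + s * x) ^ s * (Fintype.card V + s * x) := by
          rw [← Finset.sum_mul]
          exact mul_le_mul_of_nonneg_right ih (by positivity)
      _ ≤ (Fintype.card V + (s + 1 : ℕ) * x) ^ (s + 1) := by
          rw [← pow_succ]
          gcongr
          linarith

lemma sum_pow_imageDefect_le {x : ℝ} (hx : 0 ≤ x) :
    ∑ g : ι → V, x ^ imageDefect g
      ≤ (Fintype.card V + Fintype.card ι * x) ^ Fintype.card ι := by
  let e := Fintype.equivFin ι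
  calc ∑ g : ι → V, x ^ imageDefect g
      = ∑ g : Fin (Fintype.card ι) → V, x ^ imageDefect g := by
        refine Fintype.sum_equiv (e.arrowCongr (Equiv.refl V)) _ _ fun g => ?_
        have himage : univ.image (g ∘ e.symm) = univ.image g := by
          rw [← Finset.image_image, Finset.image_univ_equiv]
        change x ^ imageDefect g = x ^ imageDefect (g ∘ e.symm)
        rw [imageDefect, imageDefect, himage, Fintype.card_fin]
    _ ≤ _ := sum_pow_imageDefect_fin_le hx _

theorem card_sum_imageDefect_ge_mul_pow_le [Fintype κ] [DecidableEq κ] (B : ℕ) {x : ℝ}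
    (hx : 1 ≤ x) :
    (#{y : κ → ι → V | B ≤ ∑ i, imageDefect (y i)} : ℝ) * x ^ B
      ≤ (Fintype.card V + Fintype.card ι * x) ^ (Fintype.card ι * Fintype.card κ) := by
  have hx0 : 0 ≤ x := zero_le_one.trans hx
  calc (#{y : κ → ι → V | B ≤ ∑ i, imageDefect (y i)} : ℝ) * x ^ B
      = ∑ y ∈ {y : κ → ι → V | B ≤ ∑ i, imageDefect (y i)}, x ^ B := by
        rw [Finset.sum_const, nsmul_eq_mul]
    _ ≤ ∑ y ∈ {y : κ → ι → V | B ≤ ∑ i, imageDefect (y i)},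
          x ^ ∑ i, imageDefect (y i) :=
        Finset.sum_le_sum fun y hy => pow_le_pow_right₀ hx (Finset.mem_filter.mp hy).2
    _ ≤ ∑ y : κ → ι → V, ∏ i, x ^ imageDefect (y i) := by
        simp only [Finset.prod_pow_eq_pow_sum]
        exact Finset.sum_le_sum_of_subset_of_nonneg (Finset.subset_univ _)
          fun _ _ _ => by positivity
    _ = (∑ g : ι → V, x ^ imageDefect g) ^ Fintype.card κ := by
        rw [← Fintype.prod_sum (fun (_ : κ) (g : ι → V) => x ^ imageDefect g),
          Finset.prod_const, Finset.card_univ]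
    _ ≤ _ := by
        rw [pow_mul]
        exact pow_le_pow_left₀ (by positivity) (sum_pow_imageDefect_le hx0) _

end ImageDefect

section Columns

variable {n k w : ℕ}

/-- Column `q + 2^w i` of `Gof`, where the pattern `q` is read as a binary number below `2^w`. -/
def column (hkn : k * 2 ^ w ≤ n) (i : Fin k) (q : Fin w → ZMod 2) : Fin n :=
  Fin.castLE hkn (finProdFinEquiv (i, finFunctionFinEquiv (m := 2) q))

lemma column_injective (hkn : k * 2 ^ w ≤ n) :
    Function.Injective fun x : Fin k × (Fin w → ZMod 2) => column hkn x.1 x.2 := by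
  intro x y hxy
  have h := finProdFinEquiv.injective (Fin.castLE_injective hkn hxy)
  simp only [Prod.mk.injEq] at h
  exact Prod.ext h.1 (finFunctionFinEquiv.injective h.2)

lemma Gof_column {L d : ℕ} (hkn : k * 2 ^ w ≤ n) (c : Fin k → Fin w → CoefSp d L)
    (i : Fin k) (q : Fin w → ZMod 2) (p : Fin d → ZMod 2) (hpq : ∀ t, evalC (c i t) p = q t) :
    Gof n L k w d c p (column hkn i q) = 1 := by
  let r := finFunctionFinEquiv (m := 2) q
  have hval : (column hkn i q : ℕ) = r + 2 ^ w * i := finProdFinEquiv_apply_val _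
  have hdiv : (column hkn i q : ℕ) / 2 ^ w = i := by
    rw [hval, Nat.add_mul_div_left _ _ (by positivity), Nat.div_eq_of_lt r.2, zero_add]
  have hmod : (column hkn i q : ℕ) % 2 ^ w = r := by
    rw [hval, Nat.add_mul_mod_self_left, Nat.mod_eq_of_lt r.2]
  have hbit : ∀ t : Fin w, (r : ℕ) / 2 ^ (t : ℕ) % 2 = (q t).val := fun t => by
    rw [← finFunctionFinEquiv_symm_apply_val]
    exact congrArg (fun f : Fin w → Fin 2 => (f t : ℕ)) (Equiv.symm_apply_apply _ q)
  have hzmod : ∀ a : ZMod 2, (if a.val = 1 then 1 else 0) = a := by decide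
  unfold Gof
  refine if_pos ⟨hval ▸ (finProdFinEquiv (i, r)).2, fun t ht => ?_⟩
  rw [hdiv, hmod, cExt, dif_pos ⟨i.2, ht⟩, Nat.testBit_eq_decide_div_mod_eq,
    hbit ⟨t, ht⟩, hpq]
  simpa using (hzmod _).symm

theorem sum_card_image_le_orWeight {L d : ℕ} (hkn : k * 2 ^ w ≤ n)
    (c : Fin k → Fin w → CoefSp d L) (T : Finset (Fin d → ZMod 2)) :
    ∑ i, #(T.image fun p t => evalC (c i t) p) ≤ orWeight (Gof n L k w d c) T := by
  classical
  rw [orWeight, Nat.card_eq_fintype_card, Fintype.card_subtype,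
    ← Finset.card_sigma univ fun i => T.image fun p t => evalC (c i t) p]
  refine Finset.card_le_card_of_injOn (fun x => column hkn x.1 x.2) (fun x hx => ?_) ?_
  · obtain ⟨p, hp, hpq⟩ := Finset.mem_image.mp (Finset.mem_sigma.mp hx).2
    simp only [Finset.coe_filter, Finset.mem_univ, true_and, Set.mem_ofPred_eq]
    exact ⟨p, hp, by rw [Gof_column hkn c _ _ p (congrFun hpq)]; exact one_ne_zero⟩
  · intro x _ y _ hxy
    have h := Prod.ext_iff.mp (column_injective hkn (a₁ := (x.1, x.2)) (a₂ := (y.1, y.2)) hxy)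
    exact Sigma.ext h.1 (heq_of_eq h.2)

end Columns

section Counting

variable {n L k w d : ℕ}

def blockValues (T : Finset (Fin d → ZMod 2)) :
    (Fin k → Fin w → CoefSp d L) →+ (Fin k → T → Fin w → ZMod 2) :=
  AddMonoidHom.mk' (fun c i x t => evalC (c i t) x) fun c c' => by
    funext i x t
    exact evalC_add _ _ _

lemma blockValues_surjective {T : Finset (Fin d → ZMod 2)} (hT : T.card ≤ 2 ^ L) :
    Function.Surjective (blockValues (L := L) (k := k) (w := w) T) := by
  classical
  intro y
  choose c hc using fun i t =>
    exists_evalC_eq_on hT fun p => if h : p ∈ T then y i ⟨p, h⟩ t else 0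
  refine ⟨c, funext fun i => funext fun x => funext fun t => ?_⟩
  simp [blockValues, hc i t x x.2]

lemma imageDefect_blockValues (T : Finset (Fin d → ZMod 2)) (c : Fin k → Fin w → CoefSp d L)
    (i : Fin k) :
    imageDefect (blockValues T c i) = T.card - #(T.image fun p t => evalC (c i t) p) := by
  classical
  have himage : univ.image (blockValues T c i) = T.image fun p t => evalC (c i t) p := by
    ext v
    simp [blockValues]
  rw [imageDefect, himage, Fintype.card_coe]

theorem exists_lt_sum_imageDefect_of_not_isExpander (hkn : k * 2 ^ w ≤ n) {ε : ℝ} {t : ℕ}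
    {c : Fin k → Fin w → CoefSp d L} (h : ¬IsExpander (Gof n L k w d c) (1 - ε) k t) :
    ∃ T : Finset (Fin d → ZMod 2), T.Nonempty ∧ T.card ≤ t ∧
      ε * k * T.card < ∑ i, imageDefect (blockValues T c i) := by
  simp only [IsExpander, not_forall, not_le] at h
  obtain ⟨T, hT, htT, hlt⟩ := h
  refine ⟨T, hT, htT, ?_⟩
  have himage : ((∑ i, #(T.image fun p t => evalC (c i t) p) : ℕ) : ℝ)
      ≤ orWeight (Gof n L k w d c) T := by
    exact_mod_cast sum_card_image_le_orWeight hkn c T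
  have hdefect : ((∑ i, imageDefect (blockValues T c i) : ℕ) : ℝ)
      = k * T.card - ((∑ i, #(T.image fun p t => evalC (c i t) p) : ℕ) : ℝ) := by
    simp [imageDefect_blockValues, Nat.cast_sub Finset.card_image_le, Finset.sum_sub_distrib]
  rw [hdefect]
  linarith

theorem card_sum_imageDefect_blockValues_ge_mul_pow_le (T : Finset (Fin d → ZMod 2))
    (hT : T.card ≤ 2 ^ L) (B : ℕ) {x : ℝ} (hx : 1 ≤ x) :
    (#{c : Fin k → Fin w → CoefSp d L | B ≤ ∑ i, imageDefect (blockValues T c i)} : ℝ)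
        * ((2 : ℝ) ^ w) ^ (T.card * k) * x ^ B
      ≤ (2 ^ w + T.card * x) ^ (T.card * k) * Fintype.card (Fin k → Fin w → CoefSp d L) := by
  classical
  have htransfer := card_filter_comp_mul_card_eq (blockValues (k := k) (w := w) T)
    (blockValues_surjective hT) fun y => B ≤ ∑ i, imageDefect (y i)
  have hmarkov := card_sum_imageDefect_ge_mul_pow_le (ι := T) (κ := Fin k)
    (V := Fin w → ZMod 2) B hx
  have hV : (Fintype.card (Fin w → ZMod 2) : ℝ) = 2 ^ w := by simp
  have hY : (Fintype.card (Fin k → T → Fin w → ZMod 2) : ℝ)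
      = ((2 : ℝ) ^ w) ^ (T.card * k) := by
    simp only [Fintype.card_pi, Finset.prod_const, Finset.card_univ, Fintype.card_fin,
      Fintype.card_coe, ZMod.card]
    push_cast
    ring
  have hcount :
      (#{c : Fin k → Fin w → CoefSp d L | B ≤ ∑ i, imageDefect (blockValues T c i)} : ℝ)
      * Fintype.card (Fin k → T → Fin w → ZMod 2)
      = #{y : Fin k → T → Fin w → ZMod 2 | B ≤ ∑ i, imageDefect (y i)}
        * Fintype.card (Fin k → Fin w → CoefSp d L) := by
    exact_mod_cast htransfer
  simp only [hV, Fintype.card_coe, Fintype.card_fin] at hmarkov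
  rw [← hY, hcount, mul_right_comm]
  gcongr

end Counting

lemma add_pow_le_pow_mul_exp {N a : ℝ} (hN : 0 < N) (ha : 0 ≤ a) (m : ℕ) :
    (N + a) ^ m ≤ N ^ m * Real.exp (m * (a / N)) := by
  have hbase : N + a ≤ N * Real.exp (a / N) := by
    have := Real.add_one_le_exp (a / N)
    calc N + a = N * (a / N + 1) := by field_simp; ring
      _ ≤ N * Real.exp (a / N) := by gcongr
  calc (N + a) ^ m ≤ (N * Real.exp (a / N)) ^ m := by gcongr
    _ = N ^ m * Real.exp (m * (a / N)) := by rw [mul_pow, Real.exp_nat_mul]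

lemma exp_mul_log_le_pow_ceil {x : ℝ} (hx : 1 ≤ x) (θ : ℝ) :
    Real.exp (θ * Real.log x) ≤ x ^ ⌈θ⌉₊ := by
  rw [← Real.rpow_natCast, Real.rpow_def_of_pos (by linarith), mul_comm (Real.log x)]
  gcongr
  · exact Real.log_nonneg hx
  · exact Nat.le_ceil θ

section UnionBound

variable {n L k w d : ℕ}

/-- The moment bound `P(defect ≥ B) ≤ E[L^defect] / L^B`, with
`(1 + sL/2^w)^{sk} ≤ e^{sk/L}`. -/
theorem card_sum_imageDefect_blockValues_ge_ceil_le (hL : 1 ≤ L) {T : Finset (Fin d → ZMod 2)}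
    (hTL : T.card ≤ 2 ^ L) (hTw : T.card * L ^ 2 ≤ 2 ^ w) (ε : ℝ) :
    (#{c : Fin k → Fin w → CoefSp d L |
        ⌈ε * k * T.card⌉₊ ≤ ∑ i, imageDefect (blockValues T c i)} : ℝ)
      ≤ Real.exp (T.card * (k / L - ε * k * Real.log L))
        * Fintype.card (Fin k → Fin w → CoefSp d L) := by
  set s := T.card
  have hL0 : (0 : ℝ) < L := by exact_mod_cast hL
  have hL1 : (1 : ℝ) ≤ L := by exact_mod_cast hL
  have hN : (0 : ℝ) < 2 ^ w := by positivity
  have hratio : (s * k : ℕ) * (s * L / 2 ^ w) ≤ (s * k / L : ℝ) := by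
    have hsL : (s : ℝ) * L ^ 2 ≤ 2 ^ w := by exact_mod_cast hTw
    have : (s : ℝ) * L / 2 ^ w ≤ 1 / L := by
      rw [div_le_div_iff₀ hN hL0]
      nlinarith
    calc ((s * k : ℕ) : ℝ) * (s * L / 2 ^ w) ≤ (s * k : ℕ) * (1 / L) := by gcongr
      _ = s * k / L := by push_cast; ring
  have hpow :
      ((2 : ℝ) ^ w + s * L) ^ (s * k) ≤ ((2 : ℝ) ^ w) ^ (s * k) * Real.exp (s * k / L) :=
    (add_pow_le_pow_mul_exp hN (by positivity) _).trans (by gcongr)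
  have hcount :=
    card_sum_imageDefect_blockValues_ge_mul_pow_le (k := k) (w := w) T hTL ⌈ε * k * s⌉₊ hL1
  rw [show (s : ℝ) * (k / L - ε * k * Real.log L) = s * k / L - ε * k * s * Real.log L by ring,
    Real.exp_sub, div_mul_eq_mul_div, le_div_iff₀ (Real.exp_pos _),
    ← mul_le_mul_iff_of_pos_left (pow_pos hN (s * k))]
  calc ((2 : ℝ) ^ w) ^ (s * k) * (#{c : Fin k → Fin w → CoefSp d L |
        ⌈ε * k * s⌉₊ ≤ ∑ i, imageDefect (blockValues T c i)}
          * Real.exp (ε * k * s * Real.log L))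
      ≤ #{c : Fin k → Fin w → CoefSp d L |
          ⌈ε * k * s⌉₊ ≤ ∑ i, imageDefect (blockValues T c i)}
        * ((2 : ℝ) ^ w) ^ (s * k) * (L : ℝ) ^ ⌈ε * k * s⌉₊ := by
        rw [mul_left_comm, ← mul_assoc]
        gcongr
        exact exp_mul_log_le_pow_ceil hL1 _
    _ ≤ ((2 : ℝ) ^ w + s * L) ^ (s * k) * Fintype.card (Fin k → Fin w → CoefSp d L) :=
        hcount
    _ ≤ ((2 : ℝ) ^ w) ^ (s * k) * (Real.exp (s * k / L)
          * Fintype.card (Fin k → Fin w → CoefSp d L)) := by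
        rw [← mul_assoc]
        gcongr

theorem card_not_isExpander_le_sum (hkn : k * 2 ^ w ≤ n) (ε : ℝ) (t : ℕ) :
    Nat.card {c : Fin k → Fin w → CoefSp d L // ¬IsExpander (Gof n L k w d c) (1 - ε) k t}
      ≤ ∑ s ∈ Icc 1 t, ∑ T ∈ powersetCard s (univ : Finset (Fin d → ZMod 2)),
          #{c : Fin k → Fin w → CoefSp d L |
            ⌈ε * k * s⌉₊ ≤ ∑ i, imageDefect (blockValues T c i)} := by
  classical
  rw [Nat.card_eq_fintype_card, Fintype.card_subtype]
  refine (Finset.card_le_card fun c hc => ?_).trans <| Finset.card_biUnion_le.trans <|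
    Finset.sum_le_sum fun s _ => Finset.card_biUnion_le
  obtain ⟨T, hTne, hTt, hlt⟩ :=
    exists_lt_sum_imageDefect_of_not_isExpander hkn (Finset.mem_filter.mp hc).2
  simp only [Finset.mem_biUnion, Finset.mem_Icc, Finset.mem_powersetCard]
  exact ⟨T.card, ⟨hTne.card_pos, hTt⟩, T, ⟨Finset.subset_univ T, rfl⟩,
    Finset.mem_filter.mpr ⟨Finset.mem_univ c, Nat.ceil_le.mpr hlt.le⟩⟩

lemma choose_two_pow_mul_exp_le {d s : ℕ} (hs : 1 ≤ s) {u a : ℝ} (ha : 0 ≤ a)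
    (hu : d * Real.log 2 + u ≤ -a) :
    ((2 ^ d).choose s : ℝ) * Real.exp (s * u) ≤ Real.exp (-a) := by
  have hs1 : (1 : ℝ) ≤ s := by exact_mod_cast hs
  calc ((2 ^ d).choose s : ℝ) * Real.exp (s * u) ≤ ((2 : ℝ) ^ d) ^ s * Real.exp (s * u) := by
        gcongr
        exact_mod_cast Nat.choose_le_pow _ _
    _ = Real.exp (s * (d * Real.log 2 + u)) := by
        rw [← pow_mul, ← Real.rpow_natCast, Real.rpow_def_of_pos two_pos, ← Real.exp_add]
        push_cast
        ring_nf
    _ ≤ Real.exp (-a) := by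
        gcongr
        nlinarith

lemma two_pow_mul_exp_neg_two_mul_le (L : ℕ) :
    (2 : ℝ) ^ L * Real.exp (-(2 * L)) ≤ Real.exp (-L) := by
  have h2 : (2 : ℝ) ≤ Real.exp 1 := by linarith [Real.add_one_le_exp (1 : ℝ)]
  calc (2 : ℝ) ^ L * Real.exp (-(2 * L)) ≤ Real.exp 1 ^ L * Real.exp (-(2 * L)) := by gcongr
    _ = Real.exp (-L) := by rw [Real.exp_one_pow, ← Real.exp_add]; ring_nf

/-- There are at most `2^{ds}` sets of `s` rows, each failing with probability at most
`exp(s (k/L - k log L / √L)) ≤ 2^{-ds} e^{-2L}`, and `s` ranges over at most `2^L` values. -/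
theorem card_not_isExpander_le (hL : 1 ≤ L) (hkn : k * 2 ^ w ≤ n) (hwL : w ≤ L)
    (hΔ : d * Real.log 2 + k / L + 2 * L ≤ k / Real.sqrt L * Real.log L) :
    (Nat.card {c : Fin k → Fin w → CoefSp d L //
        ¬IsExpander (Gof n L k w d c) (1 - 1 / Real.sqrt L) k (2 ^ w / L ^ 2)} : ℝ)
      ≤ Real.exp (-L) * Nat.card (Fin k → Fin w → CoefSp d L) := by
  set t := 2 ^ w / L ^ 2
  set ε := 1 / Real.sqrt L
  set u := k / L - ε * k * Real.log L
  rw [Nat.card_eq_fintype_card (α := Fin k → Fin w → CoefSp d L)]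
  set Ω : ℝ := ((Fintype.card (Fin k → Fin w → CoefSp d L) : ℕ) : ℝ)
  have ht : t ≤ 2 ^ L := (Nat.div_le_self _ _).trans (Nat.pow_le_pow_right two_pos hwL)
  have hu : d * Real.log 2 + u ≤ -(2 * L) := by
    have : ε * k * Real.log L = k / Real.sqrt L * Real.log L := by ring
    linarith
  calc (Nat.card {c // ¬IsExpander (Gof n L k w d c) (1 - ε) k t} : ℝ)
      ≤ ∑ s ∈ Icc 1 t, ∑ T ∈ powersetCard s (univ : Finset (Fin d → ZMod 2)),
          (#{c : Fin k → Fin w → CoefSp d L |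
            ⌈ε * k * s⌉₊ ≤ ∑ i, imageDefect (blockValues T c i)} : ℝ) := by
        exact_mod_cast card_not_isExpander_le_sum hkn ε t
    _ ≤ ∑ s ∈ Icc 1 t, ∑ T ∈ powersetCard s (univ : Finset (Fin d → ZMod 2)),
          Real.exp (s * u) * Ω := by
        refine Finset.sum_le_sum fun s hs => Finset.sum_le_sum fun T hT => ?_
        obtain ⟨-, rfl⟩ := Finset.mem_powersetCard.mp hT
        have hTt := (Finset.mem_Icc.mp hs).2
        exact card_sum_imageDefect_blockValues_ge_ceil_le hL (hTt.trans ht)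
          ((Nat.le_div_iff_mul_le (by positivity)).mp hTt) ε
    _ = ∑ s ∈ Icc 1 t, ((2 ^ d).choose s : ℝ) * Real.exp (s * u) * Ω := by
        simp [Finset.card_powersetCard, mul_assoc]
    _ ≤ ∑ s ∈ Icc 1 t, Real.exp (-(2 * L)) * Ω := by
        refine Finset.sum_le_sum fun s hs => ?_
        gcongr
        exact choose_two_pow_mul_exp_le (Finset.mem_Icc.mp hs).1 (by positivity) hu
    _ ≤ (2 : ℝ) ^ L * Real.exp (-(2 * L)) * Ω := by
        rw [Finset.sum_const, Nat.card_Icc, Nat.add_sub_cancel, nsmul_eq_mul, ← mul_assoc]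
        gcongr
        exact_mod_cast ht
    _ ≤ Real.exp (-L) * Ω := by
        gcongr
        exact two_pow_mul_exp_neg_two_mul_le L

end UnionBound

lemma one_sub_le_card_subtype_div {Ω : Type*} [Fintype Ω] [Nonempty Ω] (P : Ω → Prop)
    {ε : ℝ}
    (h : (Nat.card {x // ¬P x} : ℝ) ≤ ε * Nat.card Ω) :
    1 - ε ≤ (Nat.card {x // P x} : ℝ) / Nat.card Ω := by
  classical
  have hpos : (0 : ℝ) < Nat.card Ω := by exact_mod_cast Nat.card_pos
  have hsplit : Nat.card {x // P x} + Nat.card {x // ¬P x} = Nat.card Ω := by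
    rw [Nat.card_eq_fintype_card, Nat.card_eq_fintype_card, Nat.card_eq_fintype_card,
      Fintype.card_subtype, Fintype.card_subtype]
    exact (Finset.card_filter_add_card_filter_not P).trans Finset.card_univ
  have hsplitR : (Nat.card {x // P x} : ℝ) + Nat.card {x // ¬P x} = Nat.card Ω := by
    exact_mod_cast hsplit
  rw [le_div_iff₀ hpos]
  linarith

lemma card_subtype_div_le_one {Ω : Type*} [Finite Ω] (P : Ω → Prop) :
    (Nat.card {x // P x} : ℝ) / Nat.card Ω ≤ 1 :=
  div_le_one_of_le₀ (by exact_mod_cast Finite.card_subtype_le P) (Nat.cast_nonneg _)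

lemma tendsto_clog_atTop {b : ℕ} (hb : 1 < b) : Filter.Tendsto (Nat.clog b) .atTop .atTop :=
  Filter.tendsto_atTop_atTop.mpr fun M =>
    ⟨b ^ M, fun _ hn => (Nat.clog_pow b M hb).symm.le.trans (Nat.clog_mono_right b hn)⟩

lemma eventually_pow_le_two_pow_pred (c : ℕ) :
    ∀ᶠ L : ℕ in .atTop, L ^ c ≤ 2 ^ (L - 1) := by
  filter_upwards [(tendsto_pow_const_div_const_pow_of_one_lt c one_lt_two).eventually
    (gt_mem_nhds (by norm_num : (0 : ℝ) < 1 / 2)), Filter.eventually_ge_atTop 1] with L hL hL1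
  obtain ⟨L, rfl⟩ : ∃ j, L = j + 1 := ⟨L - 1, by omega⟩
  rw [div_lt_iff₀ (by positivity), pow_succ] at hL
  rw [Nat.add_sub_cancel]
  exact_mod_cast (show ((L + 1 : ℕ) : ℝ) ^ c ≤ 2 ^ L by linarith)

lemma eventually_pow_clog_le (c : ℕ) : ∀ᶠ n : ℕ in .atTop, Nat.clog 2 n ^ c ≤ n := by
  filter_upwards [(tendsto_clog_atTop one_lt_two).eventually (eventually_pow_le_two_pow_pred c),
    Filter.eventually_ge_atTop 2] with n h hn
  exact h.trans (Nat.pow_pred_clog_lt_self one_lt_two hn).le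

lemma mul_two_pow_log_div_le {k n : ℕ} (hkn : k ≤ n) : k * 2 ^ Nat.log 2 (n / k) ≤ n := by
  rcases Nat.eq_zero_or_pos k with rfl | hk
  · simp
  calc k * 2 ^ Nat.log 2 (n / k) ≤ k * (n / k) :=
        Nat.mul_le_mul_left k (Nat.pow_log_le_self 2 (Nat.div_pos hkn hk).ne')
    _ ≤ n := Nat.mul_div_le n k

lemma pow_mul_log_two_add_le {cm ck L : ℕ} (hck : cm + 1 ≤ ck) (hck2 : 2 ≤ ck)
    (hL : 16 ≤ L) :
    (L : ℝ) ^ cm * Real.log 2 + (L : ℝ) ^ ck / L + 2 * L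
      ≤ (L : ℝ) ^ ck / Real.sqrt L * Real.log L := by
  obtain ⟨j, rfl⟩ : ∃ j, ck = j + 1 := ⟨ck - 1, by omega⟩
  have hx : (16 : ℝ) ≤ L := by exact_mod_cast hL
  have hlog2 : Real.log 2 ≤ 1 := by linarith [Real.log_two_lt_d9]
  have hlogL : 1 ≤ Real.log L := by
    rw [Real.le_log_iff_exp_le (by positivity)]
    linarith [Real.exp_one_lt_d9]
  have hsqrt : 4 ≤ Real.sqrt L := (Real.le_sqrt (by norm_num) (by positivity)).mpr (by linarith)
  have hpow : ∀ a, a ≤ j → (L : ℝ) ^ a ≤ (L : ℝ) ^ j := fun a ha =>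
    pow_le_pow_right₀ (by linarith) ha
  have hdiv : (L : ℝ) ^ (j + 1) / L = (L : ℝ) ^ j := by
    rw [pow_succ, mul_div_cancel_right₀ _ (by positivity)]
  have hdiv_sqrt : (L : ℝ) ^ (j + 1) / Real.sqrt L = (L : ℝ) ^ j * Real.sqrt L := by
    rw [pow_succ, mul_div_assoc, Real.div_sqrt]
  have h1 := hpow cm (by omega)
  have h2 : (L : ℝ) ≤ (L : ℝ) ^ j := by simpa using hpow 1 (by omega)
  have hLj : (0 : ℝ) ≤ (L : ℝ) ^ j := by positivity
  rw [hdiv, hdiv_sqrt]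
  nlinarith [mul_le_mul_of_nonneg_left hlog2 (show (0 : ℝ) ≤ (L : ℝ) ^ cm by positivity),
    mul_le_mul_of_nonneg_left hsqrt hLj,
    mul_le_mul_of_nonneg_left hlogL (mul_nonneg hLj (Real.sqrt_nonneg (L : ℝ)))]

/-- Fix constants `c_m ≥ 2` and `c_k ≥ c_m + 1`, and for each `n`
set `L = ⌈log₂ n⌉`, `k = L^{c_k}`, `m = 2^{L^{c_m}}`, `w = ⌊log₂(n/k)⌋`.  If the
`k·w` polynomials `g^{(i,j)} : F_2^{log₂ m} → F_2` are drawn independently and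
uniformly at random from the polynomials of total degree at most `L`, then the
probability that the resulting matrix `G` is a
`(1 − 1/√L, ⌊2^w / L²⌋)`-expander tends to `1` as `n → ∞`. -/
theorem stmt1 (cm ck : ℕ) (hcm : 2 ≤ cm) (hck : cm + 1 ≤ ck) :
    Filter.Tendsto (fun n : ℕ =>
      (Nat.card {c : Fin ((Nat.clog 2 n) ^ ck) →
            Fin (Nat.log 2 (n / (Nat.clog 2 n) ^ ck)) →
            CoefSp ((Nat.clog 2 n) ^ cm) (Nat.clog 2 n) //
          IsExpander
            (Gof n (Nat.clog 2 n) ((Nat.clog 2 n) ^ ck)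
              (Nat.log 2 (n / (Nat.clog 2 n) ^ ck)) ((Nat.clog 2 n) ^ cm) c)
            (1 - 1 / Real.sqrt (Nat.clog 2 n)) ((Nat.clog 2 n) ^ ck)
            (2 ^ (Nat.log 2 (n / (Nat.clog 2 n) ^ ck)) / (Nat.clog 2 n) ^ 2)} : ℝ) /
        (Nat.card (Fin ((Nat.clog 2 n) ^ ck) →
            Fin (Nat.log 2 (n / (Nat.clog 2 n) ^ ck)) →
            CoefSp ((Nat.clog 2 n) ^ cm) (Nat.clog 2 n)) : ℝ))
      Filter.atTop (nhds 1) := by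
  have hclog := tendsto_clog_atTop one_lt_two
  refine tendsto_of_tendsto_of_tendsto_of_le_of_le'
    (g := fun n => 1 - Real.exp (-(Nat.clog 2 n : ℝ))) ?_ tendsto_const_nhds ?_
    (Filter.Eventually.of_forall fun n => card_subtype_div_le_one _)
  · simpa using tendsto_const_nhds.sub
      (Real.tendsto_exp_neg_atTop_nhds_zero.comp (tendsto_natCast_atTop_atTop.comp hclog))
  · filter_upwards [hclog.eventually_ge_atTop 16, eventually_pow_clog_le ck] with n hL hkn
    refine one_sub_le_card_subtype_div _ (card_not_isExpander_le (by omega)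
      (mul_two_pow_log_div_le hkn)
      ((Nat.log_mono_right (Nat.div_le_self n _)).trans (Nat.log_le_clog 2 n)) ?_)
    push_cast
    exact pow_mul_log_two_add_le hck (by omega) hL
end

section
/- Let d and r be positive integers with r ≤ d − 1, and let T be a nonempty subset of F_2^d with |T| ≤ 2^{r+1} − 1. If g is drawn uniformly at random from the set of polynomials over F_2 in d variables of total degree at most r, then the random vector of evaluations (g(p))_{p ∈ T} is uniformly distributed on F_2^T; equivalently, the evaluations of g at the points of T are independent uniform bits. -/
/-!
Evaluation on `T` is a linear map from coefficient vectors to `F_2^T`, so all its fibres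
have the same size and uniformity amounts to surjectivity. If it is not surjective, some
nonzero `a : T → F_2` is orthogonal to every monomial `x_B` with `|B| ≤ r`. Take `B₀` of
minimal size with `∑ₚ a p x_{B₀}(p) ≠ 0`, so `|B₀| > r`. Möbius inversion over the intervals
`[E, B₀]` shows that for every `E ⊆ B₀` the points of the support of `a` that meet `B₀`
exactly in `E` have total weight `1`; hence the support of `a` has at least
`2^{|B₀|} ≥ 2^{r+1} > |T|` points.
-/

open Finset

theorem Finset.natCast_card_Icc_zmod_two {α : Type*} [DecidableEq α] (s t : Finset α) :
    ((Icc s t).card : ZMod 2) = if s = t then 1 else 0 := by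
  by_cases hst : s ⊆ t
  · rw [card_Icc_finset hst]
    split_ifs with h
    · simp [h]
    · have hpos : 0 < t.card - s.card := Nat.sub_pos_of_lt (card_lt_card (hst.ssubset_of_ne h))
      push_cast
      rw [show (2 : ZMod 2) = 0 from rfl, zero_pow hpos.ne']
  · rw [Icc_eq_empty (by simpa using hst), if_neg (by rintro rfl; exact hst le_rfl)]
    rfl

theorem ZMod.eq_of_eq_one_iff_eq_one {x y : ZMod 2} (h : x = 1 ↔ y = 1) : x = y := by
  revert x y; decide

theorem prod_zmod_two_eq_ite {ι : Type*} (B : Finset ι) (p : ι → ZMod 2) :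
    ∏ i ∈ B, p i = if ∀ i ∈ B, p i = 1 then 1 else 0 := by
  split_ifs with h
  · exact prod_eq_one h
  · obtain ⟨i, hi, hpi⟩ := not_forall₂.mp h
    exact prod_eq_zero hi (ZMod.eq_of_eq_one_iff_eq_one (by simp [hpi]))

theorem sum_Icc_prod_zmod_two {ι : Type*} [DecidableEq ι] (E A : Finset ι) (p : ι → ZMod 2) :
    ∑ B ∈ Icc E A, ∏ i ∈ B, p i = if A.filter (p · = 1) = E then 1 else 0 := by
  simp_rw [prod_zmod_two_eq_ite, sum_boole]
  have hfilter : (Icc E A).filter (fun B => ∀ i ∈ B, p i = 1) = Icc E (A.filter (p · = 1)) := by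
    ext B
    simp only [mem_filter, mem_Icc, subset_iff]
    grind
  rw [hfilter, Finset.natCast_card_Icc_zmod_two]
  simp only [eq_comm]

theorem filter_eq_one_injective {ι : Type*} [Fintype ι] :
    Function.Injective fun p : ι → ZMod 2 => univ.filter (p · = 1) := by
  intro p q hpq
  funext i
  exact ZMod.eq_of_eq_one_iff_eq_one (by simpa using congr(i ∈ $hpq))

section MonomialSum

variable {ι : Type*} [DecidableEq ι] {T : Finset (ι → ZMod 2)}

def monomialSum (a : T → ZMod 2) (B : Finset ι) : ZMod 2 :=
  ∑ p : T, a p * ∏ i ∈ B, (p : ι → ZMod 2) i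

theorem sum_Icc_monomialSum (a : T → ZMod 2) (E A : Finset ι) :
    ∑ B ∈ Icc E A, monomialSum a B = ∑ p : T with A.filter (p.1 · = 1) = E, a p := by
  simp_rw [monomialSum, sum_comm (s := Icc E A), ← mul_sum, sum_Icc_prod_zmod_two, mul_ite,
    mul_one, mul_zero, sum_ite, sum_const_zero, add_zero]

theorem exists_monomialSum_ne_zero [Fintype ι] {a : T → ZMod 2} (ha : a ≠ 0) :
    ∃ B, monomialSum a B ≠ 0 := by
  obtain ⟨p₀, hp₀⟩ := Function.ne_iff.mp ha
  by_contra! h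
  have hsum := sum_Icc_monomialSum a (univ.filter (p₀.1 · = 1)) univ
  have hfiber : (univ.filter fun p : T => univ.filter (p.1 · = 1) = univ.filter (p₀.1 · = 1))
      = {p₀} := by
    ext p
    simp only [mem_filter, mem_univ, true_and, mem_singleton, Subtype.ext_iff]
    exact filter_eq_one_injective.eq_iff
  simp only [h, sum_const_zero, hfiber, sum_singleton] at hsum
  exact hp₀ hsum.symm

theorem two_pow_le_card_support_of_monomialSum_eq_zero [Fintype ι] {a : T → ZMod 2}
    (ha : a ≠ 0) {r : ℕ} (h : ∀ B : Finset ι, B.card ≤ r → monomialSum a B = 0) :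
    2 ^ (r + 1) ≤ #{p | a p ≠ 0} := by
  obtain ⟨B₀, hB₀, hmin⟩ := exists_min_image {B | monomialSum a B ≠ 0} card
    (let ⟨B, hB⟩ := exists_monomialSum_ne_zero ha; ⟨B, by simpa using hB⟩)
  replace hB₀ : monomialSum a B₀ ≠ 0 := (mem_filter.mp hB₀).2
  have hr : r < B₀.card := by
    by_contra! hle
    exact hB₀ (h B₀ hle)
  have hsurj : Set.SurjOn (fun p : T => B₀.filter (p.1 · = 1))
      (({p | a p ≠ 0} : Finset T) : Set T) B₀.powerset := by
    intro E hE
    have hsum : ∑ p : T with B₀.filter (p.1 · = 1) = E, a p ≠ 0 := by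
      rw [← sum_Icc_monomialSum, sum_eq_single_of_mem B₀ (by simpa using hE)]
      · exact hB₀
      · intro B hB hne
        by_contra hB'
        have hlt : B.card < B₀.card := card_lt_card ((mem_Icc.mp hB).2.lt_of_ne hne)
        exact (hmin B (by simpa using hB')).not_gt hlt
    obtain ⟨p, hp, hap⟩ := exists_ne_zero_of_sum_ne_zero hsum
    exact ⟨p, by simpa using hap, (mem_filter.mp hp).2⟩
  calc 2 ^ (r + 1) ≤ 2 ^ B₀.card := Nat.pow_le_pow_right two_pos hr
    _ = #B₀.powerset := (card_powerset B₀).symm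
    _ ≤ _ := card_le_card_of_surjOn _ hsurj

end MonomialSum

section EvalMatrix

variable {ι : Type*} [Fintype ι] [DecidableEq ι]

def monomialEvalMatrix (r : ℕ) (T : Finset (ι → ZMod 2)) :
    Matrix T {S : Finset ι // S.card ≤ r} (ZMod 2) :=
  .of fun p S => ∏ i ∈ S.1, (p : ι → ZMod 2) i

theorem linearIndependent_row_monomialEvalMatrix {r : ℕ} {T : Finset (ι → ZMod 2)}
    (hT : T.card < 2 ^ (r + 1)) : LinearIndependent (ZMod 2) (monomialEvalMatrix r T).row := by
  rw [Fintype.linearIndependent_iff]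
  intro a ha
  by_contra! hne
  have hvanish : ∀ B : Finset ι, B.card ≤ r → monomialSum a B = 0 := fun B hB => by
    simpa [monomialSum, monomialEvalMatrix] using congr_fun ha ⟨B, hB⟩
  have hweight := two_pow_le_card_support_of_monomialSum_eq_zero (Function.ne_iff.mpr hne) hvanish
  exact (hweight.trans (card_filter_le _ _)).not_gt (by simpa using hT)

theorem mulVec_monomialEvalMatrix_surjective {r : ℕ} {T : Finset (ι → ZMod 2)}
    (hT : T.card < 2 ^ (r + 1)) : Function.Surjective (monomialEvalMatrix r T).mulVec := by
  have hrank := (linearIndependent_row_monomialEvalMatrix hT).rank_matrix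
  rw [Matrix.rank, ← Module.finrank_fintype_fun_eq_card (R := ZMod 2)] at hrank
  exact LinearMap.range_eq_top.mp (Submodule.eq_top_of_finrank_eq hrank)

end EvalMatrix

theorem AddMonoidHom.card_fiber_mul_card_eq {G H : Type*} [AddGroup G] [Finite G] [AddGroup H]
    (f : G →+ H) (hf : Function.Surjective f) (h : H) :
    Nat.card {g // f g = h} * Nat.card H = Nat.card G := by
  classical
  have := Fintype.ofFinite G
  have : Finite H := .of_surjective f hf
  have := Fintype.ofFinite H
  have hfiber (y : H) : #{g | f g = y} = #{g | f g = h} :=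
    AddMonoidHom.card_fiber_eq_of_mem_range f (hf y) (hf h)
  calc Nat.card {g // f g = h} * Nat.card H = ∑ y : H, #{g | f g = y} := by
        simp [hfiber, Fintype.card_subtype, mul_comm]
    _ = Nat.card G := by
        rw [Nat.card_eq_fintype_card, ← card_univ,
          card_eq_sum_card_fiberwise (f := f) (t := univ) (by simp)]

theorem mulVec_monomialEvalMatrix_apply {d r : ℕ} (T : Finset (Fin d → ZMod 2))
    (c : CoefSp d r) (p : T) : (monomialEvalMatrix r T).mulVec c p = evalC c p := by
  simp only [Matrix.mulVec, dotProduct, monomialEvalMatrix, Matrix.of_apply, evalC, mul_comm]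

theorem stmt3_general (d r : ℕ)
    (T : Finset (Fin d → ZMod 2))
    (hTcard : T.card ≤ 2 ^ (r + 1) - 1)
    (v : (Fin d → ZMod 2) → ZMod 2) :
    (Nat.card {c : CoefSp d r // ∀ p ∈ T, evalC c p = v p} : ℝ) /
      (Nat.card (CoefSp d r) : ℝ) = (1 / 2 : ℝ) ^ T.card := by
  have hT : T.card < 2 ^ (r + 1) := by have := Nat.one_le_two_pow (n := r + 1); omega
  set f := (monomialEvalMatrix r T).mulVecLin.toAddMonoidHom
  have hf : Function.Surjective f := mulVec_monomialEvalMatrix_surjective hT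
  set w : T → ZMod 2 := fun p => v p
  have hfiber : {c : CoefSp d r // ∀ p ∈ T, evalC c p = v p} ≃ {c // f c = w} :=
    Equiv.subtypeEquivRight fun c => by
      simp [f, w, funext_iff, mulVec_monomialEvalMatrix_apply]
  have hpos : 0 < Nat.card {c // f c = w} :=
    Nat.card_pos_iff.mpr ⟨nonempty_subtype.mpr (hf w), inferInstance⟩
  rw [Nat.card_congr hfiber, ← f.card_fiber_mul_card_eq hf w, Nat.card_fun, Nat.card_zmod,
    Nat.card_eq_finsetCard]
  push_cast
  rw [div_mul_cancel_left₀ (Nat.cast_ne_zero.mpr hpos.ne'), one_div_pow, one_div]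

/-- For `0 < r ≤ d − 1` and a nonempty `T ⊆ F_2^d` with
`|T| ≤ 2^{r+1} − 1`, a uniformly random polynomial over `F_2` in `d` variables of
total degree at most `r` has its evaluations on `T` uniformly distributed on
`F_2^T`: each prescribed pattern `v` of values on `T` occurs with probability
exactly `(1/2)^{|T|}`. -/
theorem stmt3 (d r : ℕ) (hd : 0 < d) (hr : 0 < r) (hrd : r ≤ d - 1)
    (T : Finset (Fin d → ZMod 2)) (hT : T.Nonempty)
    (hTcard : T.card ≤ 2 ^ (r + 1) - 1)
    (v : (Fin d → ZMod 2) → ZMod 2) :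
    (Nat.card {c : CoefSp d r // ∀ p ∈ T, evalC c p = v p} : ℝ) /
      (Nat.card (CoefSp d r) : ℝ) = (1 / 2 : ℝ) ^ T.card :=
  stmt3_general d r T hTcard v
end

section
/- For every constant C > 0 there is a function δ(d) → 0 such that for every d and every γ ∈ [0, 1 − d^{−C}] there exists an integer z* with the following two properties. (i) If c ∈ RM(d, ⌈d^{1/3}⌉) and c' is obtained from c by independently replacing each coordinate by a uniform random bit with probability γ, then Pr[dist(c, c') < z*] ≥ 1 − δ(d). (ii) If r is uniform in F_2^{2^d}, then with probability at least 1 − δ(d), every codeword c ∈ RM(d, ⌈d^{1/3}⌉) satisfies dist(r, c) > z*. -/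
open Finset

open scoped Classical

/-- Probability of the event `P` under the distribution on the finite sample space
`Ω` whose probability mass function is `w`. -/
noncomputable def prSum {Ω : Type*} [Fintype Ω] (w : Ω → ℝ) (P : Ω → Prop) : ℝ :=
  ∑ ω : Ω, if P ω then w ω else 0

/-- The binary Reed–Muller code `RM(d, r)`: the set of vectors of length `2^d`
(indexed by the points of `F_2^d`) obtained by evaluating some polynomial over
`F_2` in `d` variables of total degree at most `r`. -/
def RMcode (d r : ℕ) : Set ((Fin d → ZMod 2) → ZMod 2) :=
  {v | ∃ q : MvPolynomial (Fin d) (ZMod 2), q.totalDegree ≤ r ∧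
    ∀ x : Fin d → ZMod 2, MvPolynomial.eval x q = v x}

/-- `⌈d^{1/3}⌉`. -/
noncomputable def rmDeg (d : ℕ) : ℕ := ⌈(d : ℝ) ^ ((1 : ℝ) / 3)⌉₊

/-!
Put `n = 2^d`, `ε = d^{-C}` and `z* = ⌊n/2 - εn/8⌋`. Resampling a coordinate with probability `γ`
flips it with probability `γ/2 ≤ (1 - ε)/2`, so `dist(c, c')` is a sum of `n` independent
indicators of mean at most `(1 - ε)n/2`, whereas `dist(r, c)` has mean `n/2` for uniform `r`.
The exponential-moment (Chernoff) method bounds both tails beyond `z*` by `exp(-ε²n/256)`.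
Since `x_i^k = x_i` on `F_2`, every codeword of `RM(d, r)` is a combination of the multilinear
monomials of degree at most `r`, hence `|RM(d, r)| ≤ 2^{(d+1)^r}`; for `r = ⌈d^{1/3}⌉` this is
`exp(o(ε²n))`, so the union bound over the code still leaves `exp(-ε²n/512)`.
-/

open Real Filter Asymptotics Topology

lemma ZMod.sum_two_eq_add {M : Type*} [AddCommMonoid M] (f : ZMod 2 → M) (a : ZMod 2) :
    ∑ b, f b = f a + f (a + 1) := by
  rw [show (univ : Finset (ZMod 2)) = {a, a + 1} by revert a; decide, sum_pair (by simp)]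

lemma ZMod.pow_eq_self_of_ne_zero (b : ZMod 2) {k : ℕ} (hk : k ≠ 0) : b ^ k = b := by
  obtain ⟨k, rfl⟩ := Nat.exists_eq_succ_of_ne_zero hk
  exact IsIdempotentElem.pow_succ_eq k (by rw [IsIdempotentElem, ← sq, ZMod.pow_card])

lemma one_sub_add_mul_exp_le {q s : ℝ} (hq0 : 0 ≤ q) (hq1 : q ≤ 1) (hs : |s| ≤ 1) :
    1 - q + q * exp s ≤ exp (q * s + s ^ 2) := by
  have hexp : exp s - 1 - s ≤ s ^ 2 := (abs_le.1 (abs_exp_sub_one_sub_id_le hs)).2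
  nlinarith [add_one_le_exp (q * s + s ^ 2), sq_nonneg s]

section Probability

variable {Ω : Type*} [Fintype Ω] {w : Ω → ℝ}

lemma prSum_nonneg (hw : ∀ ω, 0 ≤ w ω) (P : Ω → Prop) : 0 ≤ prSum w P :=
  sum_nonneg fun ω _ => by split_ifs <;> simp [hw ω]

lemma one_sub_le_prSum (hw : ∑ ω, w ω = 1) {P : Ω → Prop} {δ : ℝ}
    (h : prSum w (fun ω => ¬ P ω) ≤ δ) : 1 - δ ≤ prSum w P := by
  have : prSum w P + prSum w (fun ω => ¬ P ω) = 1 := by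
    rw [← hw, prSum, prSum, ← sum_add_distrib]
    exact sum_congr rfl fun ω _ => by by_cases h : P ω <;> simp [h]
  linarith

lemma prSum_le_sum_mul {g : Ω → ℝ} {P : Ω → Prop} (hw : ∀ ω, 0 ≤ w ω) (hg : ∀ ω, 0 ≤ g ω)
    (hP : ∀ ω, P ω → 1 ≤ g ω) : prSum w P ≤ ∑ ω, w ω * g ω :=
  sum_le_sum fun ω _ => by
    split_ifs with h
    · simpa using mul_le_mul_of_nonneg_left (hP ω h) (hw ω)
    · exact mul_nonneg (hw ω) (hg ω)

lemma prSum_exists_le_sum {α : Type*} (hw : ∀ ω, 0 ≤ w ω) (T : Finset α) (E : α → Ω → Prop) :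
    prSum w (fun ω => ∃ a ∈ T, E a ω) ≤ ∑ a ∈ T, prSum w (E a) := by
  simp only [prSum]
  rw [sum_comm]
  refine sum_le_sum fun ω _ => ?_
  have hterm : ∀ a ∈ T, 0 ≤ if E a ω then w ω else 0 := fun a _ => by split_ifs <;> simp [hw ω]
  split_ifs with h
  · obtain ⟨a, ha, hE⟩ := h
    simpa [hE] using single_le_sum hterm ha
  · exact sum_nonneg hterm

end Probability

section Resampling

variable {ι : Type*} [Fintype ι]

noncomputable def resampleWeight (c : ι → ZMod 2) (γ : ℝ) (f : ι → ZMod 2) : ℝ :=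
  ∏ p, (γ / 2 + if f p = c p then 1 - γ else 0)

lemma resampleWeight_nonneg {γ : ℝ} (hγ0 : 0 ≤ γ) (hγ1 : γ ≤ 1) (c f : ι → ZMod 2) :
    0 ≤ resampleWeight c γ f :=
  prod_nonneg fun p _ => by split_ifs <;> linarith

lemma resampleWeight_one (c : ι → ZMod 2) :
    resampleWeight c 1 = fun _ => 1 / (Nat.card (ι → ZMod 2) : ℝ) := by
  funext f
  simp [resampleWeight, Nat.card_eq_fintype_card, ZMod.card]

variable [DecidableEq ι]

lemma sum_resampleWeight_mul_pow_hammingDist (c : ι → ZMod 2) (γ l : ℝ) :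
    ∑ f, resampleWeight c γ f * l ^ hammingDist c f
      = (1 - γ / 2 + γ / 2 * l) ^ Fintype.card ι := by
  have hpow : ∀ f : ι → ZMod 2, l ^ hammingDist c f = ∏ p, if c p = f p then 1 else l := by
    intro f
    rw [prod_ite, prod_const_one, one_mul, prod_const]
    rfl
  have hcoord : ∀ a : ZMod 2,
      ∑ b, (γ / 2 + if b = a then 1 - γ else 0) * (if a = b then 1 else l)
        = 1 - γ / 2 + γ / 2 * l := fun a => by
    rw [ZMod.sum_two_eq_add _ a]
    simp
    ring
  simp_rw [resampleWeight, hpow, ← prod_mul_distrib]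
  rw [← Fintype.prod_sum
    fun p b => (γ / 2 + if b = c p then 1 - γ else 0) * if c p = b then 1 else l]
  simp only [hcoord, prod_const, card_univ]

lemma sum_resampleWeight (c : ι → ZMod 2) (γ : ℝ) : ∑ f, resampleWeight c γ f = 1 := by
  simpa using sum_resampleWeight_mul_pow_hammingDist c γ 1

lemma prSum_resampleWeight_le_exp {γ s : ℝ} (hγ0 : 0 ≤ γ) (hγ1 : γ ≤ 1) (hs : |s| ≤ 1)
    (c : ι → ZMod 2) (z : ℕ) {P : (ι → ZMod 2) → Prop}
    (hP : ∀ f, P f → s * z ≤ s * hammingDist c f) :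
    prSum (resampleWeight c γ) P ≤ exp (Fintype.card ι * (γ / 2 * s + s ^ 2) - s * z) := by
  calc prSum (resampleWeight c γ) P
      ≤ ∑ f, resampleWeight c γ f * exp (s * hammingDist c f - s * z) :=
        prSum_le_sum_mul (resampleWeight_nonneg hγ0 hγ1 c) (fun _ => (exp_pos _).le)
          fun f hf => one_le_exp (sub_nonneg.2 (hP f hf))
    _ = exp (-(s * z)) * ∑ f, resampleWeight c γ f * exp s ^ hammingDist c f := by
        rw [mul_sum]
        refine sum_congr rfl fun f _ => ?_
        rw [← exp_nat_mul, sub_eq_add_neg, exp_add]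
        ring_nf
    _ = exp (-(s * z)) * (1 - γ / 2 + γ / 2 * exp s) ^ Fintype.card ι := by
        rw [sum_resampleWeight_mul_pow_hammingDist]
    _ ≤ exp (-(s * z)) * exp (γ / 2 * s + s ^ 2) ^ Fintype.card ι := by
        have hbase : 0 ≤ 1 - γ / 2 + γ / 2 * exp s := by nlinarith [exp_pos s]
        gcongr
        exact one_sub_add_mul_exp_le (by linarith) (by linarith) hs
    _ = exp (Fintype.card ι * (γ / 2 * s + s ^ 2) - s * z) := by
        rw [← exp_nat_mul, ← exp_add]
        ring_nf

lemma prSum_le_hammingDist_le_exp {γ ε : ℝ} (hγ0 : 0 ≤ γ) (hγε : γ ≤ 1 - ε)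
    (hε : 16 ≤ ε * Fintype.card ι) (c : ι → ZMod 2) {z : ℕ}
    (hz : Fintype.card ι / 2 - ε * Fintype.card ι / 8 < z + 1) :
    prSum (resampleWeight c γ) (fun f => z ≤ hammingDist c f)
      ≤ exp (-(ε ^ 2 * Fintype.card ι) / 256) := by
  set n : ℝ := (Fintype.card ι : ℝ)
  have hn : 0 ≤ n := Nat.cast_nonneg _
  have hε0 : 0 < ε := by
    by_contra! h
    nlinarith
  refine (prSum_resampleWeight_le_exp hγ0 (by linarith) (s := ε / 16)
    (abs_le.2 ⟨by linarith, by linarith⟩) c z fun f hf => ?_).trans (exp_le_exp.2 ?_)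
  · gcongr
  · nlinarith

lemma prSum_hammingDist_le_le_exp {ε : ℝ} (hε0 : 0 ≤ ε) (hε1 : ε ≤ 1)
    (c : ι → ZMod 2) {z : ℕ} (hz : z ≤ Fintype.card ι / 2 - ε * Fintype.card ι / 8) :
    prSum (resampleWeight c 1) (fun f => hammingDist c f ≤ z)
      ≤ exp (-(ε ^ 2 * Fintype.card ι) / 256) := by
  refine (prSum_resampleWeight_le_exp zero_le_one le_rfl (s := -(ε / 16))
    (abs_le.2 ⟨by linarith, by linarith⟩) c z fun f hf => ?_).trans (exp_le_exp.2 ?_)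
  · have : (hammingDist c f : ℝ) ≤ z := by exact_mod_cast hf
    nlinarith
  · nlinarith

lemma prSum_exists_hammingDist_le_le {ε : ℝ} (hε0 : 0 ≤ ε) (hε1 : ε ≤ 1)
    (T : Finset (ι → ZMod 2)) {z : ℕ} (hz : z ≤ Fintype.card ι / 2 - ε * Fintype.card ι / 8) :
    prSum (fun _ => 1 / (Nat.card (ι → ZMod 2) : ℝ)) (fun r => ∃ c ∈ T, hammingDist r c ≤ z)
      ≤ T.card * exp (-(ε ^ 2 * Fintype.card ι) / 256) := by
  calc _ ≤ ∑ c ∈ T, prSum (fun _ => 1 / (Nat.card (ι → ZMod 2) : ℝ))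
        (fun r => hammingDist r c ≤ z) := prSum_exists_le_sum (fun _ => by positivity) T _
    _ ≤ ∑ c ∈ T, exp (-(ε ^ 2 * Fintype.card ι) / 256) := sum_le_sum fun c _ => by
        simpa only [resampleWeight_one, hammingDist_comm c]
          using prSum_hammingDist_le_le_exp hε0 hε1 c hz
    _ = _ := by rw [sum_const, nsmul_eq_mul]

end Resampling

lemma MvPolynomial.card_support_le_totalDegree {R σ : Type*} [CommSemiring R]
    {p : MvPolynomial σ R} {m : σ →₀ ℕ} (hm : m ∈ p.support) : m.support.card ≤ p.totalDegree := by
  have : m.support.card • 1 ≤ m.sum fun _ e => e :=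
    card_nsmul_le_sum _ _ _ fun i hi => Nat.one_le_iff_ne_zero.2 (Finsupp.mem_support_iff.1 hi)
  simpa using this.trans (MvPolynomial.le_totalDegree hm)

lemma RMcode_subset_span (d r : ℕ) :
    RMcode d r ⊆ Submodule.span (ZMod 2) (Set.range fun S : {S : Finset (Fin d) // S.card ≤ r} =>
      fun x : Fin d → ZMod 2 => ∏ i ∈ S.1, x i) := by
  rintro v ⟨q, hdeg, hq⟩
  have hv : v = ∑ m ∈ q.support, q.coeff m • fun x : Fin d → ZMod 2 => ∏ i ∈ m.support, x i := by
    funext x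
    rw [← hq x, MvPolynomial.eval_eq, Finset.sum_apply]
    refine sum_congr rfl fun m _ => ?_
    simp only [Pi.smul_apply, smul_eq_mul]
    congr 1
    exact prod_congr rfl fun i hi => ZMod.pow_eq_self_of_ne_zero _ (Finsupp.mem_support_iff.1 hi)
  rw [hv]
  exact Submodule.sum_mem _ fun m hm => Submodule.smul_mem _ _ <| Submodule.subset_span
    ⟨⟨m.support, (MvPolynomial.card_support_le_totalDegree hm).trans hdeg⟩, rfl⟩

lemma card_subtype_card_le_le_pow (d r : ℕ) :
    Fintype.card {S : Finset (Fin d) // S.card ≤ r} ≤ (d + 1) ^ r := by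
  have hsub : univ.filter (fun S : Finset (Fin d) => S.card ≤ r)
      ⊆ (range (r + 1)).biUnion fun i => powersetCard i univ := fun S hS => by
    simp only [mem_filter] at hS
    simpa [Nat.lt_succ_iff] using hS.2
  rw [Fintype.card_subtype, add_pow]
  calc _ ≤ _ := card_le_card hsub
    _ ≤ ∑ i ∈ range (r + 1), d.choose i := by
        simpa using card_biUnion_le (s := range (r + 1))
          (t := fun i => powersetCard i (univ : Finset (Fin d)))
    _ ≤ ∑ i ∈ range (r + 1), d ^ i * 1 ^ (r - i) * r.choose i := sum_le_sum fun i hi => by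
        have : 1 ≤ r.choose i := Nat.choose_pos (Nat.lt_succ_iff.1 (mem_range.1 hi))
        simpa using (Nat.choose_le_pow d i).trans (Nat.le_mul_of_pos_right _ this)

lemma card_RMcode_le (d r : ℕ) : (RMcode d r).toFinset.card ≤ 2 ^ (d + 1) ^ r := by
  set v := fun S : {S : Finset (Fin d) // S.card ≤ r} => fun x : Fin d → ZMod 2 => ∏ i ∈ S.1, x i
  have hsub : (RMcode d r).toFinset ⊆ univ.image (Fintype.linearCombination (ZMod 2) v) := by
    intro c hc
    have : c ∈ LinearMap.range (Fintype.linearCombination (ZMod 2) v) := by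
      rw [Fintype.range_linearCombination]
      exact RMcode_subset_span d r (Set.mem_toFinset.1 hc)
    obtain ⟨a, ha⟩ := this
    exact mem_image.2 ⟨a, mem_univ _, ha⟩
  calc _ ≤ _ := card_le_card hsub
    _ ≤ Fintype.card ({S : Finset (Fin d) // S.card ≤ r} → ZMod 2) := card_image_le
    _ = 2 ^ Fintype.card {S : Finset (Fin d) // S.card ≤ r} := by simp [ZMod.card]
    _ ≤ 2 ^ (d + 1) ^ r := Nat.pow_le_pow_right two_pos (card_subtype_card_le_le_pow d r)

lemma card_RMcode_le_exp (d r : ℕ) :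
    ((RMcode d r).toFinset.card : ℝ) ≤ exp (((d : ℝ) + 1) ^ r) := by
  calc ((RMcode d r).toFinset.card : ℝ) ≤ 2 ^ (d + 1) ^ r := by exact_mod_cast card_RMcode_le d r
    _ ≤ exp 1 ^ (d + 1) ^ r := by gcongr; linarith [add_one_le_exp 1]
    _ = exp (((d : ℝ) + 1) ^ r) := by rw [exp_one_pow]; push_cast; rfl

lemma isLittleO_rpow_one_third_mul_log :
    (fun x : ℝ => x ^ (1 / 3 : ℝ) * log x) =o[atTop] id := by
  have h := (isBigO_refl (fun x : ℝ => x ^ (1 / 3 : ℝ)) atTop).mul_isLittleO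
    (isLittleO_log_rpow_atTop (by norm_num : (0 : ℝ) < 2 / 3))
  refine h.congr' EventuallyEq.rfl ?_
  filter_upwards [eventually_gt_atTop 0] with x hx
  rw [← rpow_add hx]
  norm_num

lemma eventually_log_terms_le_mul_log_two (C : ℝ) : ∀ᶠ x : ℝ in atTop,
    log 512 + 2 * x ^ (1 / 3 : ℝ) * log x + (4 + 2 * C) * log x ≤ x * log 2 := by
  have h : (fun x : ℝ => log 512 + 2 * x ^ (1 / 3 : ℝ) * log x + (4 + 2 * C) * log x)
      =o[atTop] id :=
    ((isLittleO_const_id_atTop _).add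
      (isLittleO_rpow_one_third_mul_log.const_mul_left 2 |>.congr_left fun x => by ring)).add
      (isLittleO_log_id_atTop.const_mul_left _)
  filter_upwards [h.bound (log_pos one_lt_two), eventually_ge_atTop 0] with x hx hx0
  rw [norm_eq_abs, norm_eq_abs, id, abs_of_nonneg hx0] at hx
  linarith [le_abs_self (log 512 + 2 * x ^ (1 / 3 : ℝ) * log x + (4 + 2 * C) * log x)]

lemma eventually_pow_rmDeg_le (C : ℝ) : ∀ᶠ d : ℕ in atTop,
    512 * ((d : ℝ) + 1) ^ (rmDeg d + 1) ≤ ((d : ℝ) ^ (-C)) ^ 2 * 2 ^ d := by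
  filter_upwards [tendsto_natCast_atTop_atTop.eventually (eventually_log_terms_le_mul_log_two C),
    eventually_ge_atTop 2] with d hd hd2
  have hd2' : (2 : ℝ) ≤ d := by exact_mod_cast hd2
  have hlog : log ((d : ℝ) + 1) ≤ 2 * log d := by
    calc log ((d : ℝ) + 1) ≤ log ((d : ℝ) ^ 2) := log_le_log (by linarith) (by nlinarith)
      _ = 2 * log d := by rw [log_pow]; norm_num
  have hdeg : (rmDeg d : ℝ) + 1 ≤ (d : ℝ) ^ (1 / 3 : ℝ) + 2 := by
    have := Nat.ceil_lt_add_one (rpow_nonneg (Nat.cast_nonneg (d : ℕ)) (1 / 3 : ℝ))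
    rw [rmDeg]
    linarith
  rw [← log_le_log_iff (by positivity) (by positivity), log_mul (by norm_num) (by positivity),
    log_mul (by positivity) (by positivity), log_pow, log_pow, log_pow, log_rpow (by linarith)]
  push_cast
  have hlogd : 0 ≤ log (d : ℝ) := log_nonneg (by linarith)
  nlinarith [mul_le_mul hdeg hlog (log_nonneg (by linarith)) (by positivity)]

noncomputable def rmThreshold (C : ℝ) (d : ℕ) : ℕ :=
  ⌊(2 : ℝ) ^ d / 2 - (d : ℝ) ^ (-C) * 2 ^ d / 8⌋₊

/-- `(d + 1) ^ (rmDeg d + 1)` dominates `log |RM(d, rmDeg d)|`; for the finitely many `d` where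
the condition fails, the value `1` makes both claims trivial. -/
noncomputable def rmFailureBound (C : ℝ) (d : ℕ) : ℝ :=
  if 512 * ((d : ℝ) + 1) ^ (rmDeg d + 1) ≤ ((d : ℝ) ^ (-C)) ^ 2 * 2 ^ d then
    exp (-(((d : ℝ) ^ (-C)) ^ 2 * 2 ^ d) / 512)
  else 1

lemma tendsto_rmFailureBound (C : ℝ) : Tendsto (rmFailureBound C) atTop (𝓝 0) := by
  have hgrow : Tendsto (fun d : ℕ => ((d : ℝ) ^ (-C)) ^ 2 * 2 ^ d / 512) atTop atTop := by
    refine tendsto_atTop_mono' _ ?_ tendsto_natCast_atTop_atTop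
    filter_upwards [eventually_pow_rmDeg_le C] with d hd
    have : (d : ℝ) + 1 ≤ ((d : ℝ) + 1) ^ (rmDeg d + 1) :=
      le_self_pow₀ (by linarith [d.cast_nonneg (α := ℝ)]) (by omega)
    linarith
  refine (tendsto_exp_neg_atTop_nhds_zero.comp hgrow).congr' ?_
  filter_upwards [eventually_pow_rmDeg_le C] with d hd
  simp [rmFailureBound, hd, neg_div]

lemma card_fun_fin_zmod_two (d : ℕ) :
    (Fintype.card (Fin d → ZMod 2) : ℝ) = 2 ^ d := by
  simp [ZMod.card]

lemma one_sub_rmFailureBound_le_prSum_resampleWeight {C γ : ℝ} {d : ℕ} (hγ0 : 0 ≤ γ)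
    (hγ1 : γ ≤ 1 - (d : ℝ) ^ (-C)) (c : (Fin d → ZMod 2) → ZMod 2) :
    1 - rmFailureBound C d
      ≤ prSum (resampleWeight c γ) (fun c' => hammingDist c c' < rmThreshold C d) := by
  have hε0 : 0 ≤ (d : ℝ) ^ (-C) := rpow_nonneg d.cast_nonneg _
  unfold rmFailureBound
  split_ifs with hgood
  · refine one_sub_le_prSum (sum_resampleWeight c γ) ?_
    simp only [not_lt]
    have hK : 1 ≤ ((d : ℝ) + 1) ^ (rmDeg d + 1) :=
      one_le_pow₀ (by linarith [d.cast_nonneg (α := ℝ)])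
    refine (prSum_le_hammingDist_le_exp hγ0 hγ1 ?_ c ?_).trans ?_
    · rw [card_fun_fin_zmod_two]
      nlinarith [pow_pos (two_pos (α := ℝ)) d]
    · rw [card_fun_fin_zmod_two]
      exact Nat.lt_floor_add_one _
    · rw [card_fun_fin_zmod_two]
      exact exp_le_exp.2 (by nlinarith [pow_pos (two_pos (α := ℝ)) d])
  · simp [prSum_nonneg (resampleWeight_nonneg hγ0 (by linarith) c)]

lemma one_sub_rmFailureBound_le_prSum_uniform {C : ℝ} {d : ℕ} (hε1 : (d : ℝ) ^ (-C) ≤ 1) :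
    1 - rmFailureBound C d
      ≤ prSum (fun _ : (Fin d → ZMod 2) → ZMod 2 =>
          1 / (Nat.card ((Fin d → ZMod 2) → ZMod 2) : ℝ))
        (fun r => ∀ c ∈ RMcode d (rmDeg d), rmThreshold C d < hammingDist r c) := by
  set ε : ℝ := (d : ℝ) ^ (-C)
  have hε0 : 0 ≤ ε := rpow_nonneg d.cast_nonneg _
  unfold rmFailureBound
  split_ifs with hgood
  · refine one_sub_le_prSum (by rw [← resampleWeight_one 0]; exact sum_resampleWeight 0 1) ?_
    have hz : (rmThreshold C d : ℝ) ≤ Fintype.card (Fin d → ZMod 2) / 2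
        - ε * Fintype.card (Fin d → ZMod 2) / 8 := by
      rw [card_fun_fin_zmod_two]
      exact Nat.floor_le (by nlinarith [pow_pos (two_pos (α := ℝ)) d])
    have hunion := prSum_exists_hammingDist_le_le hε0 hε1 (RMcode d (rmDeg d)).toFinset hz
    simp only [Set.mem_toFinset, card_fun_fin_zmod_two] at hunion
    simp only [not_forall, not_lt, exists_prop]
    refine hunion.trans ?_
    have hK : ((d : ℝ) + 1) ^ rmDeg d ≤ ((d : ℝ) + 1) ^ (rmDeg d + 1) :=
      pow_le_pow_right₀ (by linarith [d.cast_nonneg (α := ℝ)]) (by omega)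
    calc _ ≤ exp (ε ^ 2 * 2 ^ d / 512) * exp (-(ε ^ 2 * 2 ^ d) / 256) := by
          gcongr
          exact (card_RMcode_le_exp d (rmDeg d)).trans (exp_le_exp.2 (by linarith))
      _ = exp (-(ε ^ 2 * 2 ^ d) / 512) := by rw [← exp_add]; ring_nf
  · simpa using prSum_nonneg (fun _ => by positivity) _

theorem stmt6_general (C : ℝ) :
    ∃ δ : ℕ → ℝ, Filter.Tendsto δ Filter.atTop (nhds 0) ∧
      ∀ d : ℕ, ∀ γ : ℝ, 0 ≤ γ → γ ≤ 1 - (d : ℝ) ^ (-C) →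
        ∃ z : ℕ,
          (∀ c ∈ RMcode d (rmDeg d),
            1 - δ d ≤ prSum
              (fun c' : (Fin d → ZMod 2) → ZMod 2 =>
                ∏ p : Fin d → ZMod 2, (γ / 2 + if c' p = c p then 1 - γ else 0))
              (fun c' => hammingDist c c' < z)) ∧
          (1 - δ d ≤ prSum
            (fun _ : (Fin d → ZMod 2) → ZMod 2 =>
              (1 / (Nat.card ((Fin d → ZMod 2) → ZMod 2) : ℝ)))
            (fun r => ∀ c ∈ RMcode d (rmDeg d), z < hammingDist r c)) := by
  refine ⟨rmFailureBound C, tendsto_rmFailureBound C, fun d γ hγ0 hγ1 =>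
    ⟨rmThreshold C d, fun c _ => ?_, ?_⟩⟩
  · exact one_sub_rmFailureBound_le_prSum_resampleWeight hγ0 hγ1 c
  · exact one_sub_rmFailureBound_le_prSum_uniform (by linarith)

/-- For every constant `C > 0` there is `δ(d) → 0` such that for
every `d` and every `γ ∈ [0, 1 − d^{−C}]` there is a cutoff `z*` with:
(i) for every codeword `c ∈ RM(d, ⌈d^{1/3}⌉)`, if `c'` replaces each coordinate of
`c` independently by a uniform bit with probability `γ`, then
`dist(c, c') < z*` with probability at least `1 − δ(d)`; (ii) a uniformly random
`r ∈ F_2^{2^d}` has, with probability at least `1 − δ(d)`, Hamming distance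
greater than `z*` from every codeword of `RM(d, ⌈d^{1/3}⌉)`. -/
theorem stmt6 (C : ℝ) (hC : 0 < C) :
    ∃ δ : ℕ → ℝ, Filter.Tendsto δ Filter.atTop (nhds 0) ∧
      ∀ d : ℕ, ∀ γ : ℝ, 0 ≤ γ → γ ≤ 1 - (d : ℝ) ^ (-C) →
        ∃ z : ℕ,
          (∀ c ∈ RMcode d (rmDeg d),
            1 - δ d ≤ prSum
              (fun c' : (Fin d → ZMod 2) → ZMod 2 =>
                ∏ p : Fin d → ZMod 2, (γ / 2 + if c' p = c p then 1 - γ else 0))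
              (fun c' => hammingDist c c' < z)) ∧
          (1 - δ d ≤ prSum
            (fun _ : (Fin d → ZMod 2) → ZMod 2 =>
              (1 / (Nat.card ((Fin d → ZMod 2) → ZMod 2) : ℝ)))
            (fun r => ∀ c ∈ RMcode d (rmDeg d), z < hammingDist r c)) :=
  stmt6_general C
end

section
/- Let q ≥ 2 and let k, m be positive integers with 4m(1 + q^{k/4}) ≤ q^{k/3}. Let Y_1, …, Y_m be independent random variables, each distributed either as Binom(q^k, q^{−3k/4}) or as 1 + Binom(q^k − 1, q^{−3k/4}). Then Pr[Y_1 + … + Y_m > q^{k/3}] ≤ m·exp(−q^{k/4}/6). -/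
/-!
Write `Q = q^{k/4} = q^k · q^{-3k/4}` for the mean of the binomial part. If the sum exceeds
`q^{k/3} ≥ 4m(1 + Q)`, some `Y_i` exceeds `a = 4(1 + Q)`, so a union bound reduces the claim to a
single coordinate, whose marginal under the product weight is its own law. For that law the
exponential Markov inequality at `t = 1/2`, together with `(1 + x)^N ≤ e^{Nx}` for the generating
function, gives `Pr[Y > a] ≤ exp(-a/2 + 1/2 + Q(√e - 1)) ≤ exp(-Q/6)`.
-/

open Finset

open scoped Classical

open Real

section prSum

variable {Ω : Type*} [Fintype Ω]

theorem prSum_le_sum_prSum {ι : Type*} [Fintype ι] {w : Ω → ℝ} (hw : ∀ ω, 0 ≤ w ω)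
    {P : Ω → Prop} {E : ι → Ω → Prop} (hPE : ∀ ω, P ω → ∃ i, E i ω) :
    prSum w P ≤ ∑ i, prSum w (E i) := by
  unfold prSum
  rw [Finset.sum_comm]
  refine Finset.sum_le_sum fun ω _ => ?_
  have hterm : ∀ i, 0 ≤ if E i ω then w ω else 0 := fun i => by split_ifs <;> simp [hw ω]
  by_cases hP : P ω
  · obtain ⟨i, hi⟩ := hPE ω hP
    calc (if P ω then w ω else 0) = if E i ω then w ω else 0 := by rw [if_pos hP, if_pos hi]
      _ ≤ ∑ i, if E i ω then w ω else 0 :=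
        Finset.single_le_sum (fun j _ => hterm j) (Finset.mem_univ i)
  · rw [if_neg hP]
    exact Finset.sum_nonneg fun i _ => hterm i

theorem prSum_prod_eval {ι α : Type*} [Fintype ι] [DecidableEq ι] [Fintype α]
    (w : ι → α → ℝ) (i : ι) (hw : ∀ j ≠ i, ∑ a, w j a = 1) (P : α → Prop) :
    prSum (fun y : ι → α => ∏ j, w j (y j)) (fun y => P (y i)) = prSum (w i) P := by
  let f : ι → α → ℝ := fun j a => if j = i then (if P a then w j a else 0) else w j a
  have hf : ∀ y : ι → α, (if P (y i) then ∏ j, w j (y j) else 0) = ∏ j, f j (y j) := by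
    intro y
    by_cases hP : P (y i)
    · rw [if_pos hP]
      refine Finset.prod_congr rfl fun j _ => ?_
      by_cases hj : j = i
      · subst hj; simp [f, hP]
      · simp [f, hj]
    · rw [if_neg hP, eq_comm]
      exact Finset.prod_eq_zero (Finset.mem_univ i) (by simp [f, hP])
  calc prSum (fun y : ι → α => ∏ j, w j (y j)) (fun y => P (y i))
      = ∏ j, ∑ a, f j a := by
        rw [prSum, Fintype.prod_sum]; exact Finset.sum_congr rfl fun y _ => hf y
    _ = ∑ a, f i a := Fintype.prod_eq_single i fun j hj => by simpa [f, hj] using hw j hj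
    _ = prSum (w i) P := by simp [f, prSum]

end prSum

noncomputable def binomPMF (N : ℕ) (p : ℝ) (j : ℕ) : ℝ :=
  N.choose j * p ^ j * (1 - p) ^ (N - j)

noncomputable def shiftedBinomPMF (N : ℕ) (p : ℝ) (j : ℕ) : ℝ :=
  if j = 0 then 0 else binomPMF (N - 1) p (j - 1)

section Binomial

variable {N : ℕ} {p : ℝ}

theorem binomPMF_nonneg (hp0 : 0 ≤ p) (hp1 : p ≤ 1) (j : ℕ) : 0 ≤ binomPMF N p j := by
  have : 0 ≤ 1 - p := sub_nonneg.mpr hp1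
  unfold binomPMF; positivity

theorem shiftedBinomPMF_nonneg (hp0 : 0 ≤ p) (hp1 : p ≤ 1) (j : ℕ) :
    0 ≤ shiftedBinomPMF N p j := by
  unfold shiftedBinomPMF
  split_ifs
  · exact le_rfl
  · exact binomPMF_nonneg hp0 hp1 _

theorem sum_binomPMF_mul_pow (N : ℕ) (p c : ℝ) :
    ∑ j ∈ range (N + 1), binomPMF N p j * c ^ j = (p * c + (1 - p)) ^ N := by
  rw [add_pow]
  refine Finset.sum_congr rfl fun j _ => ?_
  rw [binomPMF, mul_pow]; ring

theorem sum_shiftedBinomPMF_mul_pow (hN : 1 ≤ N) (p c : ℝ) :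
    ∑ j ∈ range (N + 1), shiftedBinomPMF N p j * c ^ j = c * (p * c + (1 - p)) ^ (N - 1) := by
  obtain ⟨M, rfl⟩ := Nat.exists_eq_add_of_le' hN
  rw [Finset.sum_range_succ', Nat.add_sub_cancel, ← sum_binomPMF_mul_pow, Finset.mul_sum]
  simp only [shiftedBinomPMF, Nat.add_one_ne_zero, if_false, if_true, Nat.add_sub_cancel,
    pow_succ, zero_mul, add_zero]
  exact Finset.sum_congr rfl fun j _ => by ring

theorem sum_binomPMF (N : ℕ) (p : ℝ) : ∑ j ∈ range (N + 1), binomPMF N p j = 1 := by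
  simpa using sum_binomPMF_mul_pow N p 1

theorem sum_shiftedBinomPMF (hN : 1 ≤ N) (p : ℝ) :
    ∑ j ∈ range (N + 1), shiftedBinomPMF N p j = 1 := by
  simpa using sum_shiftedBinomPMF_mul_pow hN p 1

theorem one_add_pow_le_exp_mul {x : ℝ} (hx : -1 ≤ x) (M : ℕ) : (1 + x) ^ M ≤ exp (M * x) := by
  rw [exp_nat_mul]
  exact pow_le_pow_left₀ (by linarith) (by linarith [add_one_le_exp x]) M

theorem exp_mul_natCast (t : ℝ) (j : ℕ) : exp (t * j) = exp t ^ j := by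
  rw [← exp_nat_mul, mul_comm]

theorem sum_binomPMF_mul_exp_le (hp0 : 0 ≤ p) {t : ℝ} (ht : 0 ≤ t) :
    ∑ j ∈ range (N + 1), binomPMF N p j * exp (t * j) ≤ exp (N * (p * (exp t - 1))) := by
  have hx : 0 ≤ p * (exp t - 1) := mul_nonneg hp0 (by linarith [one_le_exp ht])
  simp_rw [exp_mul_natCast, sum_binomPMF_mul_pow]
  calc (p * exp t + (1 - p)) ^ N = (1 + p * (exp t - 1)) ^ N := by ring
    _ ≤ _ := one_add_pow_le_exp_mul (by linarith) N

theorem sum_shiftedBinomPMF_mul_exp_le (hN : 1 ≤ N) (hp0 : 0 ≤ p) {t : ℝ} (ht : 0 ≤ t) :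
    ∑ j ∈ range (N + 1), shiftedBinomPMF N p j * exp (t * j) ≤
      exp (t + N * (p * (exp t - 1))) := by
  have hx : 0 ≤ p * (exp t - 1) := mul_nonneg hp0 (by linarith [one_le_exp ht])
  simp_rw [exp_mul_natCast, sum_shiftedBinomPMF_mul_pow hN, exp_add]
  gcongr
  calc (p * exp t + (1 - p)) ^ (N - 1) = (1 + p * (exp t - 1)) ^ (N - 1) := by ring
    _ ≤ exp ((N - 1 : ℕ) * (p * (exp t - 1))) := one_add_pow_le_exp_mul (by linarith) _
    _ ≤ exp (N * (p * (exp t - 1))) := by gcongr; exact_mod_cast N.sub_le 1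

end Binomial

theorem sum_ite_lt_le_exp_mul_sum {α : Type*} (s : Finset α) {w : α → ℝ}
    (hw : ∀ j ∈ s, 0 ≤ w j) (X : α → ℝ) (a : ℝ) {t : ℝ} (ht : 0 ≤ t) :
    ∑ j ∈ s, (if a < X j then w j else 0) ≤ exp (-(t * a)) * ∑ j ∈ s, w j * exp (t * X j) := by
  rw [Finset.mul_sum]
  refine Finset.sum_le_sum fun j hj => ?_
  have hweight : 0 ≤ exp (-(t * a)) * (w j * exp (t * X j)) := by
    have := hw j hj; positivity
  split_ifs with ha
  · calc w j ≤ w j * exp (t * (X j - a)) :=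
          le_mul_of_one_le_right (hw j hj) (one_le_exp (mul_nonneg ht (by linarith)))
      _ = exp (-(t * a)) * (w j * exp (t * X j)) := by
          rw [mul_left_comm, ← exp_add]; ring_nf
  · exact hweight

noncomputable def binomOrShiftedPMF (N : ℕ) (p : ℝ) (b : Bool) (j : ℕ) : ℝ :=
  if b then shiftedBinomPMF N p j else binomPMF N p j

section BinomOrShifted

variable {N : ℕ} {p : ℝ}

theorem binomOrShiftedPMF_nonneg (hp0 : 0 ≤ p) (hp1 : p ≤ 1) (b : Bool) (j : ℕ) :
    0 ≤ binomOrShiftedPMF N p b j := by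
  cases b
  · exact binomPMF_nonneg hp0 hp1 j
  · exact shiftedBinomPMF_nonneg hp0 hp1 j

theorem sum_binomOrShiftedPMF (hN : 1 ≤ N) (p : ℝ) (b : Bool) :
    ∑ j : Fin (N + 1), binomOrShiftedPMF N p b j = 1 := by
  rw [Fin.sum_univ_eq_sum_range (binomOrShiftedPMF N p b)]
  cases b
  · exact sum_binomPMF N p
  · exact sum_shiftedBinomPMF hN p

theorem prSum_binomOrShiftedPMF_lt_le (hN : 1 ≤ N) (hp0 : 0 ≤ p) (hp1 : p ≤ 1)
    (b : Bool) (a : ℝ) {t : ℝ} (ht : 0 ≤ t) :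
    prSum (fun j : Fin (N + 1) => binomOrShiftedPMF N p b j) (fun j => a < ((j : ℕ) : ℝ)) ≤
      exp (-(t * a) + (t + N * p * (exp t - 1))) := by
  have hmgf : ∑ j ∈ range (N + 1), binomOrShiftedPMF N p b j * exp (t * j) ≤
      exp (t + N * p * (exp t - 1)) := by
    rw [mul_assoc]
    cases b
    · exact (sum_binomPMF_mul_exp_le hp0 ht).trans (exp_le_exp.mpr (by linarith))
    · exact sum_shiftedBinomPMF_mul_exp_le hN hp0 ht
  unfold prSum
  rw [Fin.sum_univ_eq_sum_range (fun j => if a < (j : ℝ) then binomOrShiftedPMF N p b j else 0),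
    exp_add]
  exact (sum_ite_lt_le_exp_mul_sum _ (fun j _ => binomOrShiftedPMF_nonneg hp0 hp1 b j) _ a
    ht).trans (by gcongr)

end BinomOrShifted

theorem chernoff_exponent_le {Q : ℝ} (hQ : 0 ≤ Q) :
    -(1 / 2 * (4 * (1 + Q))) + (1 / 2 + Q * (exp (1 / 2) - 1)) ≤ -Q / 6 := by
  have he : exp (1 / 2) ≤ 17 / 6 := by
    linarith [exp_le_exp.mpr (by norm_num : (1 / 2 : ℝ) ≤ 1), exp_one_lt_d9]
  nlinarith

theorem stmt7_general (q k m : ℕ) (hq : 2 ≤ q)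
    (hsum : 4 * (m : ℝ) * (1 + (q : ℝ) ^ ((k : ℝ) / 4)) ≤ (q : ℝ) ^ ((k : ℝ) / 3))
    (σ : Fin m → Bool) :
    prSum
      (fun y : Fin m → Fin (q ^ k + 1) =>
        ∏ i : Fin m,
          (if σ i then
            (if (y i : ℕ) = 0 then 0 else
              ((q ^ k - 1).choose ((y i : ℕ) - 1) : ℝ) *
                ((q : ℝ) ^ (-(3 * (k : ℝ)) / 4)) ^ ((y i : ℕ) - 1) *
                (1 - (q : ℝ) ^ (-(3 * (k : ℝ)) / 4)) ^ ((q ^ k - 1) - ((y i : ℕ) - 1)))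
          else
            ((q ^ k).choose (y i : ℕ) : ℝ) *
              ((q : ℝ) ^ (-(3 * (k : ℝ)) / 4)) ^ (y i : ℕ) *
              (1 - (q : ℝ) ^ (-(3 * (k : ℝ)) / 4)) ^ (q ^ k - (y i : ℕ))))
      (fun y => (q : ℝ) ^ ((k : ℝ) / 3) < ∑ i : Fin m, ((y i : ℕ) : ℝ)) ≤
    (m : ℝ) * Real.exp (-(q : ℝ) ^ ((k : ℝ) / 4) / 6) := by
  change prSum (fun y : Fin m → Fin (q ^ k + 1) =>
    ∏ i, binomOrShiftedPMF (q ^ k) ((q : ℝ) ^ (-(3 * (k : ℝ)) / 4)) (σ i) (y i)) _ ≤ _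
  set p : ℝ := (q : ℝ) ^ (-(3 * (k : ℝ)) / 4)
  set Q : ℝ := (q : ℝ) ^ ((k : ℝ) / 4)
  have hq0 : (0 : ℝ) < q := by exact_mod_cast (by omega : 0 < q)
  have hp0 : 0 ≤ p := by positivity
  have hp1 : p ≤ 1 := rpow_le_one_of_one_le_of_nonpos (by exact_mod_cast (by omega : 1 ≤ q))
    (by have := k.cast_nonneg (α := ℝ); linarith)
  have hN : 1 ≤ q ^ k := Nat.one_le_pow _ _ (by omega)
  have hNp : ((q ^ k : ℕ) : ℝ) * p = Q := by
    rw [Nat.cast_pow, ← rpow_natCast, ← rpow_add hq0]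
    congr 1; ring
  set W : Fin m → Fin (q ^ k + 1) → ℝ := fun i j => binomOrShiftedPMF (q ^ k) p (σ i) j
  calc _ ≤ ∑ i, prSum (fun y : Fin m → Fin (q ^ k + 1) => ∏ j, W j (y j))
          (fun y => 4 * (1 + Q) < ((y i : ℕ) : ℝ)) :=
        prSum_le_sum_prSum (fun y => prod_nonneg fun i _ => binomOrShiftedPMF_nonneg hp0 hp1 _ _)
          fun y hy => by
            simpa using exists_lt_of_sum_lt (s := univ) (f := fun _ => 4 * (1 + Q))
              (by simp only [sum_const, card_univ, Fintype.card_fin, nsmul_eq_mul]; linarith)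
    _ = ∑ i, prSum (W i) (fun j => 4 * (1 + Q) < ((j : ℕ) : ℝ)) :=
        sum_congr rfl fun i _ =>
          prSum_prod_eval W i (fun j _ => sum_binomOrShiftedPMF hN p _)
            (fun j => 4 * (1 + Q) < ((j : ℕ) : ℝ))
    _ ≤ ∑ _i : Fin m, exp (-Q / 6) := sum_le_sum fun i _ =>
        (prSum_binomOrShiftedPMF_lt_le hN hp0 hp1 (σ i) _ (t := 1 / 2) (by norm_num)).trans
          (exp_le_exp.mpr (by rw [hNp]; exact chernoff_exponent_le (by positivity)))
    _ = m * exp (-Q / 6) := by simp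

/-- Let `q ≥ 2` and let `k, m` be positive integers with
`4m(1 + q^{k/4}) ≤ q^{k/3}`.  Let `Y_1, …, Y_m` be independent, each distributed
either as `Binom(q^k, q^{−3k/4})` (when `σ i = false`) or as
`1 + Binom(q^k − 1, q^{−3k/4})` (when `σ i = true`); the joint distribution is
given by the product of the binomial mass functions on the sample space
`Fin m → Fin (q^k + 1)` (which supports both distributions).  Then
`Pr[Y_1 + … + Y_m > q^{k/3}] ≤ m·exp(−q^{k/4}/6)`. -/
theorem stmt7 (q k m : ℕ) (hq : 2 ≤ q) (hk : 0 < k) (hm : 0 < m)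
    (hsum : 4 * (m : ℝ) * (1 + (q : ℝ) ^ ((k : ℝ) / 4)) ≤ (q : ℝ) ^ ((k : ℝ) / 3))
    (σ : Fin m → Bool) :
    prSum
      (fun y : Fin m → Fin (q ^ k + 1) =>
        ∏ i : Fin m,
          (if σ i then
            (if (y i : ℕ) = 0 then 0 else
              ((q ^ k - 1).choose ((y i : ℕ) - 1) : ℝ) *
                ((q : ℝ) ^ (-(3 * (k : ℝ)) / 4)) ^ ((y i : ℕ) - 1) *
                (1 - (q : ℝ) ^ (-(3 * (k : ℝ)) / 4)) ^ ((q ^ k - 1) - ((y i : ℕ) - 1)))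
          else
            ((q ^ k).choose (y i : ℕ) : ℝ) *
              ((q : ℝ) ^ (-(3 * (k : ℝ)) / 4)) ^ (y i : ℕ) *
              (1 - (q : ℝ) ^ (-(3 * (k : ℝ)) / 4)) ^ (q ^ k - (y i : ℕ))))
      (fun y => (q : ℝ) ^ ((k : ℝ) / 3) < ∑ i : Fin m, ((y i : ℕ) : ℝ)) ≤
    (m : ℝ) * Real.exp (-(q : ℝ) ^ ((k : ℝ) / 4) / 6) :=
  stmt7_general q k m hq hsum σ
end

section
/- Let G be an (m, n, k)-matrix over F_2, let Σ be a finite alphabet, let s ∈ Σ^n have pairwise distinct entries, and let α, β ∈ [0, 1]. Sample a random vector w ∈ (F_2 ∪ {?})^m as follows: draw a uniformly random function t : Σ → F_2, and independently for each i ∈ [m], set w_i = '?' with probability α; otherwise, with probability β set w_i to an independent uniform random bit, and with the remaining probability 1 − β set w_i = t(s_{N_G(i,1)}) + … + t(s_{N_G(i,k)}) (addition in F_2). Then w has exactly the same distribution as the random vector c' obtained as follows: draw x ∈ F_2^n uniformly at random, let c = Gx, and independently for each i ∈ [m] set c'_i = '?' with probability α, set c'_i to an independent uniform random bit with probability (1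 − α)·β, and set c'_i = c_i otherwise. -/
open Finset

open scoped Classical

/-!
Restriction along an injective `s` identifies `S → ZMod 2` with
`(Fin n → ZMod 2) × ((range s)ᶜ → ZMod 2)`, so for uniform `t` the restriction `t ∘ s` is
uniform on `Fin n → ZMod 2`; since `w` depends on `t` only through `t ∘ s`, it is
distributed as `c'`.
-/

section RestrictAlongInjective

variable {ι S β M : Type*} {s : ι → S}

noncomputable def Function.Injective.piEquivPiCompProd (hs : Function.Injective s) :
    (S → β) ≃ (ι → β) × ({a // a ∉ Set.range s} → β) :=
  (Equiv.piEquivPiSubtypeProd (· ∈ Set.range s) fun _ => β).trans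
    (Equiv.prodCongr (Equiv.arrowCongr (Equiv.ofInjective s hs).symm (Equiv.refl β))
      (Equiv.refl _))

theorem Function.Injective.piEquivPiCompProd_fst (hs : Function.Injective s) (t : S → β) :
    (hs.piEquivPiCompProd t).1 = fun j => t (s j) := by
  funext j
  simp [Function.Injective.piEquivPiCompProd, Equiv.piEquivPiSubtypeProd]

variable [Fintype ι] [DecidableEq ι] [Fintype S] [DecidableEq S] [Fintype β]

theorem Function.Injective.sum_comp_eq_card_smul_sum [AddCommMonoid M]
    (hs : Function.Injective s) (F : (ι → β) → M) :
    ∑ t : S → β, F (fun j => t (s j)) =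
      Fintype.card ({a // a ∉ Set.range s} → β) • ∑ x, F x := by
  calc ∑ t : S → β, F (fun j => t (s j))
      = ∑ t : S → β, F (hs.piEquivPiCompProd t).1 := by
        simp only [hs.piEquivPiCompProd_fst]
    _ = ∑ p : (ι → β) × ({a // a ∉ Set.range s} → β), F p.1 :=
        hs.piEquivPiCompProd.sum_comp (fun p => F p.1)
    _ = Fintype.card ({a // a ∉ Set.range s} → β) • ∑ x, F x := by
        rw [Fintype.sum_prod_type]
        simp only [sum_const, card_univ, smul_sum]

theorem Function.Injective.sum_uniform_comp [Nonempty β] [Field M] [CharZero M]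
    (hs : Function.Injective s) (F : (ι → β) → M) :
    ∑ t : S → β, (1 / (Nat.card (S → β) : M)) * F (fun j => t (s j)) =
      ∑ x : ι → β, (1 / (Nat.card (ι → β) : M)) * F x := by
  have hcard : Nat.card (S → β) =
      Nat.card (ι → β) * Fintype.card ({a // a ∉ Set.range s} → β) := by
    rw [Nat.card_congr hs.piEquivPiCompProd, Nat.card_prod, Nat.card_eq_fintype_card,
      Nat.card_eq_fintype_card]
  have hpos : 0 < Fintype.card ({a // a ∉ Set.range s} → β) := Fintype.card_pos
  rw [← mul_sum, ← mul_sum, hs.sum_comp_eq_card_smul_sum, nsmul_eq_mul, hcard, Nat.cast_mul]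
  field_simp

end RestrictAlongInjective

theorem stmt8_general (m n : ℕ) (G : Fin m → Fin n → ZMod 2)
    (S : Type*) [Fintype S]
    (s : Fin n → S) (hs : Function.Injective s)
    (α β : ℝ)
    (w : Fin m → Option (ZMod 2)) :
    (∑ t : S → ZMod 2, (1 / (Nat.card (S → ZMod 2) : ℝ)) *
        ∏ i : Fin m,
          (if w i = none then α else
            (1 - α) * β / 2 +
              if w i = some (∑ j, G i j * t (s j)) then (1 - α) * (1 - β) else 0)) =
    (∑ x : Fin n → ZMod 2, (1 / (Nat.card (Fin n → ZMod 2) : ℝ)) *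
        ∏ i : Fin m,
          (if w i = none then α else
            (1 - α) * β / 2 +
              if w i = some (∑ j, G i j * x j) then (1 - α) * (1 - β) else 0)) :=
  hs.sum_uniform_comp fun x => ∏ i : Fin m,
    (if w i = none then α else
      (1 - α) * β / 2 + if w i = some (∑ j, G i j * x j) then (1 - α) * (1 - β) else 0)

/-- Let `G` be an `(m,n,k)`-matrix over `F_2`, `Σ` a finite alphabet,
`s ∈ Σ^n` with pairwise distinct entries, and `α, β ∈ [0,1]`.  Sample
`w ∈ (F_2 ∪ {?})^m` by drawing a uniform `t : Σ → F_2` and, independently for each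
`i`, setting `w_i = ?` with probability `α`, a uniform bit with probability
`(1−α)·β`, and `w_i = t(s_{N_G(i,1)}) + … + t(s_{N_G(i,k)})` otherwise (the sum of
`t(s_j)` over the nonzero columns `j` of row `i`, written as `∑_j G_{ij}·t(s_j)`).
Then `w` has exactly the same distribution as `c'`, obtained by drawing a uniform
`x ∈ F_2^n`, setting `c = Gx`, and independently erasing/corrupting each
coordinate with the same probabilities.  (Equality of distributions is stated as
equality of the probability mass functions at every point `w`.) -/
theorem stmt8 (m n k : ℕ) (G : Fin m → Fin n → ZMod 2)
    (hG : ∀ i, (Finset.univ.filter (fun j => G i j ≠ 0)).card = k)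
    (S : Type*) [Fintype S]
    (s : Fin n → S) (hs : Function.Injective s)
    (α β : ℝ) (hα0 : 0 ≤ α) (hα1 : α ≤ 1) (hβ0 : 0 ≤ β) (hβ1 : β ≤ 1)
    (w : Fin m → Option (ZMod 2)) :
    (∑ t : S → ZMod 2, (1 / (Nat.card (S → ZMod 2) : ℝ)) *
        ∏ i : Fin m,
          (if w i = none then α else
            (1 - α) * β / 2 +
              if w i = some (∑ j, G i j * t (s j)) then (1 - α) * (1 - β) else 0)) =
    (∑ x : Fin n → ZMod 2, (1 / (Nat.card (Fin n → ZMod 2) : ℝ)) *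
        ∏ i : Fin m,
          (if w i = none then α else
            (1 - α) * β / 2 +
              if w i = some (∑ j, G i j * x j) then (1 - α) * (1 - β) else 0)) :=
  stmt8_general m n G S s hs α β w
end

section
/- There is an absolute constant c > 0 such that the following holds. Let n, m, k be positive integers with k ≤ n, let H be an (m, n, k)-matrix, let Σ and Γ be finite alphabets, and let S ⊆ Γ^m be any fixed subset. If f_1, …, f_m : Σ^k → Γ are independent uniformly random functions (collectively F), then with probability at least 1 − 2·exp(−c·|Σ|^{4k/5}/m) over the choice of F, one has | Pr_{b ∼ P_{H,F}}[b ∈ S] − |S|/|Γ|^m | < |Σ|^{−k/10}. -/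
open Finset

open scoped Classical

/-- `N_H(i, ·)`: the column indices of the nonzero entries of the row `r` (which
has exactly `k` of them), in increasing order. -/
noncomputable def nbr {n k : ℕ} (r : Fin n → ZMod 2)
    (hr : (Finset.univ.filter (fun c => r c ≠ 0)).card = k) (j : Fin k) : Fin n :=
  ((Finset.univ.filter (fun c => r c ≠ 0)).orderIsoOfFin hr j : Fin n)

/-! For fixed `H` and `S`, regard `P_{H,F}(S)` as a function `g` of the table
`F : [m] × Σ^k → Γ`, whose entries are independent and uniform. For a fixed seed `s` the
entries `F (i, s|N_H(i))` sit at `m` distinct positions, so `𝔼_F g = |S| / |Γ|^m`. Changing one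
entry `F (i, x)` only affects the seeds with `s|N_H(i) = x`, a `|Σ|^(-k)` fraction of them, so `g`
has bounded differences `|Σ|^(-k)` in each of its `m |Σ|^k` coordinates. McDiarmid's inequality
(Hoeffding's lemma in one coordinate, then induction on the number of coordinates) bounds the
failure probability by `2 exp (-2 ε² / (m |Σ|^(-k)))`, which for `ε = |Σ|^(-k/10)` is
`2 exp (-2 |Σ|^(4k/5) / m)`: the constant `c = 2` works. -/

open Real ProbabilityTheory MeasureTheory Function
open scoped BigOperators

lemma integral_uniformOfFintype_eq_expect {A : Type*} [Fintype A] [Nonempty A]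
    [MeasurableSpace A] [MeasurableSingletonClass A] (f : A → ℝ) :
    ∫ a, f a ∂(PMF.uniformOfFintype A).toMeasure = 𝔼 a, f a := by
  simp [PMF.integral_eq_sum, Fintype.expect_eq_sum_div_card, Finset.mul_sum, div_eq_inv_mul]

lemma natCard_subtype_div_natCard {α : Type*} [Fintype α] (P : α → Prop) [DecidablePred P] :
    (Nat.card {x // P x} : ℝ) / Nat.card α = 𝔼 x, if P x then 1 else 0 := by
  rw [Fintype.expect_eq_sum_div_card, sum_boole, Nat.card_eq_fintype_card,
    Nat.card_eq_fintype_card, Fintype.card_subtype]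

lemma expect_pi_fin_succ {A : Type*} [Fintype A] {N : ℕ} (f : (Fin (N + 1) → A) → ℝ) :
    𝔼 x, f x = 𝔼 y : Fin N → A, 𝔼 a, f (Fin.cons a y) := by
  rw [Fintype.expect_equiv (Fin.consEquiv fun _ => A).symm f (fun p => f (Fin.cons p.1 p.2))
    (fun x => by simp [Fin.consEquiv]), ← univ_product_univ, expect_product, expect_comm]

lemma expect_comp_of_injective {I Ω B : Type*} [Fintype I] [DecidableEq I] [Fintype Ω]
    [DecidableEq Ω] [Fintype B] [Nonempty B]
    {j : I → Ω} (hj : Injective j) (φ : (I → B) → ℝ) :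
    𝔼 F : Ω → B, φ (F ∘ j) = 𝔼 b : I → B, φ b := by
  let r := Equiv.ofInjective j hj
  let e := Equiv.piEquivPiSubtypeProd (· ∈ Set.range j) fun _ => B
  calc 𝔼 F : Ω → B, φ (F ∘ j)
      = 𝔼 p : (Set.range j → B) × ({ω // ω ∉ Set.range j} → B), φ (p.1 ∘ r) :=
        Fintype.expect_equiv e _ _ fun _ => rfl
    _ = 𝔼 u : Set.range j → B, φ (u ∘ r) := by
        rw [← univ_product_univ, expect_product]
        simp only [Fintype.expect_const]
    _ = 𝔼 b : I → B, φ b := Fintype.expect_equiv (r.arrowCongr (Equiv.refl B)).symm _ _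
        fun _ => rfl

lemma expect_exp_mul_le_of_abs_sub_le {A : Type*} [Fintype A] [Nonempty A] {v : A → ℝ} {L : ℝ}
    (hv : ∀ a b, |v a - v b| ≤ L) (hmean : 𝔼 a, v a = 0) (t : ℝ) :
    𝔼 a, exp (t * v a) ≤ exp (t ^ 2 * L ^ 2 / 8) := by
  let _ : MeasurableSpace A := ⊤
  obtain ⟨a₀, ha₀⟩ := Finite.exists_min v
  have hIcc : ∀ a, v a ∈ Set.Icc (v a₀) (v a₀ + L) := fun a =>
    ⟨ha₀ a, by linarith [(abs_le.mp (hv a a₀)).2]⟩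
  have hoeffding := hasSubgaussianMGF_of_mem_Icc_of_integral_eq_zero
    (μ := (PMF.uniformOfFintype A).toMeasure) (Measurable.of_discrete (f := v)).aemeasurable
    (ae_of_all _ hIcc) (by rw [integral_uniformOfFintype_eq_expect, hmean])
  have hmgf := hoeffding.mgf_le t
  rw [mgf, integral_uniformOfFintype_eq_expect] at hmgf
  refine hmgf.trans_eq ?_
  congr 1
  simp only [add_sub_cancel_left, div_pow, NNReal.coe_div, NNReal.coe_pow, coe_nnnorm,
    norm_eq_abs, sq_abs, NNReal.coe_ofNat]
  ring

def HasBoundedDifferences {ι A : Type*} [DecidableEq ι] (g : (ι → A) → ℝ) (c : ι → ℝ) : Prop :=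
  ∀ x i a, |g (update x i a) - g x| ≤ c i

lemma HasBoundedDifferences.neg {ι A : Type*} [DecidableEq ι] {g : (ι → A) → ℝ} {c : ι → ℝ}
    (hg : HasBoundedDifferences g c) : HasBoundedDifferences (fun x => -g x) c := fun x i a => by
  rw [← abs_neg]; convert hg x i a using 2; ring

lemma HasBoundedDifferences.fin_cons {A : Type*} [Fintype A] [Nonempty A] {N : ℕ}
    {g : (Fin (N + 1) → A) → ℝ} {c : Fin (N + 1) → ℝ} (hg : HasBoundedDifferences g c) :
    HasBoundedDifferences (fun y => 𝔼 a, g (Fin.cons a y)) (fun j => c j.succ) := fun y j b => by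
  rw [← expect_sub_distrib]
  refine (abs_expect_le _ _).trans (Finset.expect_le univ_nonempty fun a _ => ?_)
  rw [Fin.cons_update]
  exact hg _ _ _

theorem HasBoundedDifferences.expect_exp_mul_sub_expect_le_fin {A : Type*} [Fintype A]
    [Nonempty A] :
    ∀ {N : ℕ} {g : (Fin N → A) → ℝ} {c : Fin N → ℝ}, HasBoundedDifferences g c → ∀ t : ℝ,
      𝔼 x, exp (t * (g x - 𝔼 y, g y)) ≤ exp (t ^ 2 * (∑ i, c i ^ 2) / 8)
  | 0, g, c, _, t => by simp [Unique.eq_default (α := Fin 0 → A)]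
  | N + 1, g, c, hg, t => by
    -- Condition on the last `N` coordinates: Hoeffding's lemma in the first one, induction for
    -- the conditional mean `h`.
    set h : (Fin N → A) → ℝ := fun y => 𝔼 a, g (Fin.cons a y)
    have hmean : 𝔼 x, g x = 𝔼 y, h y := expect_pi_fin_succ g
    have hfibre : ∀ y, 𝔼 a, exp (t * (g (Fin.cons a y) - h y)) ≤ exp (t ^ 2 * c 0 ^ 2 / 8) :=
      fun y => expect_exp_mul_le_of_abs_sub_le (fun a b => by
          simpa [Fin.update_cons_zero] using hg (Fin.cons b y) 0 a)
        (by rw [expect_sub_distrib, Fintype.expect_const, sub_self]) t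
    calc 𝔼 x, exp (t * (g x - 𝔼 y, g y))
        = 𝔼 y, (𝔼 a, exp (t * (g (Fin.cons a y) - h y))) * exp (t * (h y - 𝔼 z, h z)) := by
          rw [expect_pi_fin_succ, hmean]
          refine expect_congr rfl fun y _ => ?_
          rw [Finset.expect_mul]
          refine expect_congr rfl fun a _ => ?_
          rw [← exp_add]; ring_nf
      _ ≤ 𝔼 y, exp (t ^ 2 * c 0 ^ 2 / 8) * exp (t * (h y - 𝔼 z, h z)) :=
          expect_le_expect fun y _ => by gcongr; exact hfibre y
      _ ≤ exp (t ^ 2 * c 0 ^ 2 / 8) * exp (t ^ 2 * (∑ j : Fin N, c j.succ ^ 2) / 8) := by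
          rw [← Finset.mul_expect]
          gcongr
          exact hg.fin_cons.expect_exp_mul_sub_expect_le_fin t
      _ = exp (t ^ 2 * (∑ i, c i ^ 2) / 8) := by
          rw [← exp_add, Fin.sum_univ_succ]; ring_nf

theorem HasBoundedDifferences.expect_exp_mul_sub_expect_le {ι A : Type*} [Fintype ι]
    [DecidableEq ι] [Fintype A] [Nonempty A] {g : (ι → A) → ℝ} {c : ι → ℝ}
    (hg : HasBoundedDifferences g c) (t : ℝ) :
    𝔼 x, exp (t * (g x - 𝔼 y, g y)) ≤ exp (t ^ 2 * (∑ i, c i ^ 2) / 8) := by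
  let e := Fintype.equivFin ι
  let E : (Fin (Fintype.card ι) → A) ≃ (ι → A) := (e.arrowCongr (Equiv.refl A)).symm
  have hE : ∀ φ : (ι → A) → ℝ, 𝔼 x, φ x = 𝔼 z, φ (E z) := fun φ =>
    (Fintype.expect_equiv E _ φ fun _ => rfl).symm
  have hg' : HasBoundedDifferences (g ∘ E) (c ∘ e.symm) := fun z i a => by
    simpa [E, Equiv.arrowCongr, update_comp_equiv] using hg (z ∘ e) (e.symm i) a
  rw [hE, hE, ← e.symm.sum_comp]
  exact hg'.expect_exp_mul_sub_expect_le_fin t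

theorem HasBoundedDifferences.expect_le_sub_expect_le {ι A : Type*} [Fintype ι]
    [DecidableEq ι] [Fintype A] [Nonempty A] {g : (ι → A) → ℝ} {c : ι → ℝ}
    (hg : HasBoundedDifferences g c) {ε : ℝ} (hε : 0 ≤ ε) :
    𝔼 x, (if ε ≤ g x - 𝔼 y, g y then 1 else 0) ≤ exp (-2 * ε ^ 2 / ∑ i, c i ^ 2) := by
  set C := ∑ i, c i ^ 2
  rcases (show 0 ≤ C by positivity).eq_or_lt with hC | hC
  · rw [← hC, div_zero, exp_zero]
    exact expect_le univ_nonempty fun x _ => by split_ifs <;> norm_num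
  set t := 4 * ε / C
  have ht : 0 ≤ t := by positivity
  calc 𝔼 x, (if ε ≤ g x - 𝔼 y, g y then 1 else 0)
      ≤ 𝔼 x, exp (t * (g x - 𝔼 y, g y)) * exp (-(t * ε)) :=
        expect_le_expect fun x _ => by
          rw [← exp_add]
          split_ifs with hx
          · exact one_le_exp (by nlinarith)
          · exact (exp_pos _).le
    _ ≤ exp (t ^ 2 * C / 8) * exp (-(t * ε)) := by
        rw [← Finset.expect_mul]
        gcongr
        exact hg.expect_exp_mul_sub_expect_le t
    _ = exp (-2 * ε ^ 2 / C) := by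
        rw [← exp_add]
        congr 1
        simp only [t]
        field_simp
        ring

theorem HasBoundedDifferences.one_sub_two_mul_exp_le_expect_abs_sub_lt {ι A : Type*} [Fintype ι]
    [DecidableEq ι] [Fintype A] [Nonempty A] {g : (ι → A) → ℝ} {c : ι → ℝ}
    (hg : HasBoundedDifferences g c) {ε : ℝ} (hε : 0 ≤ ε) :
    1 - 2 * exp (-2 * ε ^ 2 / ∑ i, c i ^ 2) ≤ 𝔼 x, if |g x - 𝔼 y, g y| < ε then 1 else 0 := by
  have upper := hg.expect_le_sub_expect_le hε
  have lower := hg.neg.expect_le_sub_expect_le hε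
  simp only [expect_neg_distrib, sub_neg_eq_add, neg_add_eq_sub] at lower
  calc 1 - 2 * exp (-2 * ε ^ 2 / ∑ i, c i ^ 2)
      ≤ 𝔼 x, ((1 : ℝ) - (if ε ≤ g x - 𝔼 y, g y then 1 else 0)
          - (if ε ≤ 𝔼 y, g y - g x then 1 else 0)) := by
        rw [expect_sub_distrib, expect_sub_distrib, Fintype.expect_const]
        linarith
    _ ≤ 𝔼 x, if |g x - 𝔼 y, g y| < ε then 1 else 0 :=
        expect_le_expect fun x _ => by
          split_ifs <;> grind [abs_sub_lt_iff]

lemma nbr_injective {n k : ℕ} (r : Fin n → ZMod 2)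
    (hr : (univ.filter fun c => r c ≠ 0).card = k) : Injective (nbr r hr) :=
  Subtype.val_injective.comp (orderIsoOfFin _ hr).injective

section Planted

variable {n m k : ℕ} (H : Fin m → Fin n → ZMod 2)
  (hH : ∀ i, (univ.filter fun j => H i j ≠ 0).card = k) {Sa Γa : Type*} [Fintype Sa]
  (S : Set (Fin m → Γa))

/-- `Pr_{b ∼ P_{H,F}} [b ∈ S]`, the functions `f_i` being tabulated as `F (i, ·) = f_i`. -/
noncomputable def plantedProb (F : Fin m × (Fin k → Sa) → Γa) : ℝ :=
  𝔼 s : Fin n → Sa, if (fun i => F (i, fun j => s (nbr (H i) (hH i) j))) ∈ S then 1 else 0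

lemma expect_plantedProb [Nonempty Sa] [Fintype Γa] [Nonempty Γa] :
    𝔼 F : Fin m × (Fin k → Sa) → Γa, plantedProb H hH S F
      = Nat.card S / (Fintype.card Γa : ℝ) ^ m := by
  have hview : ∀ s : Fin n → Sa,
      𝔼 F : Fin m × (Fin k → Sa) → Γa,
        (if (fun i => F (i, fun j => s (nbr (H i) (hH i) j))) ∈ S then (1 : ℝ) else 0)
        = 𝔼 b : Fin m → Γa, if b ∈ S then 1 else 0 := fun s =>
    expect_comp_of_injective (j := fun i => (i, fun j => s (nbr (H i) (hH i) j)))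
      (fun _ _ h => congrArg Prod.fst h) fun b => if b ∈ S then 1 else 0
  simp only [plantedProb]
  rw [expect_comm, Finset.expect_congr rfl fun s _ => hview s, Fintype.expect_const,
    ← natCard_subtype_div_natCard]
  simp [Nat.card_eq_fintype_card]

lemma hasBoundedDifferences_plantedProb [Nonempty Sa] :
    HasBoundedDifferences (plantedProb (Sa := Sa) H hH S)
      fun _ => ((Fintype.card Sa : ℝ) ^ k)⁻¹ := fun F p γ => by
  simp only [plantedProb]
  rw [← expect_sub_distrib]
  calc |𝔼 s : Fin n → Sa, _|
      ≤ 𝔼 s : Fin n → Sa, if (fun j => s (nbr (H p.1) (hH p.1) j)) = p.2 then 1 else 0 := by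
        refine (abs_expect_le _ _).trans (expect_le_expect fun s _ => ?_)
        by_cases hs : (fun j => s (nbr (H p.1) (hH p.1) j)) = p.2
        · rw [if_pos hs]
          split_ifs <;> norm_num
        · have hF : (fun i => update F p γ (i, fun j => s (nbr (H i) (hH i) j)))
              = fun i => F (i, fun j => s (nbr (H i) (hH i) j)) :=
            funext fun i => update_of_ne (fun h => hs (by subst h; rfl)) _ _
          simp [hF, hs]
    _ = ((Fintype.card Sa : ℝ) ^ k)⁻¹ := by
        refine (expect_comp_of_injective (nbr_injective (H p.1) (hH p.1))
          fun b => if b = p.2 then (1 : ℝ) else 0).trans ?_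
        rw [← natCard_subtype_div_natCard]
        simp [Nat.card_eq_fintype_card]

end Planted

lemma two_mul_rpow_sq_div_eq {q : ℝ} (hq : 0 < q) (m k : ℕ) :
    2 * (q ^ (-(k : ℝ) / 10)) ^ 2 / (m * (q ^ k)⁻¹) = 2 * q ^ (4 * (k : ℝ) / 5) / m := by
  have hsq : (q ^ (-(k : ℝ) / 10)) ^ 2 = q ^ (4 * (k : ℝ) / 5) * (q ^ k)⁻¹ := by
    rw [← rpow_natCast, ← rpow_mul hq.le, ← rpow_natCast q k, ← rpow_neg hq.le, ← rpow_add hq]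
    ring_nf
  rw [hsq, ← mul_assoc, mul_div_mul_right _ _ (by positivity)]

/-- There is an absolute constant `c > 0` such that: for all
positive `n, m, k` with `k ≤ n`, every `(m,n,k)`-matrix `H`, all finite alphabets
`Σ, Γ` and every fixed subset `S ⊆ Γ^m`, if `f_1, …, f_m : Σ^k → Γ` are independent
uniformly random functions, then with probability at least
`1 − 2·exp(−c·|Σ|^{4k/5}/m)` over `F = (f_1, …, f_m)` one has
`| Pr_{b ∼ P_{H,F}}[b ∈ S] − |S|/|Γ|^m | < |Σ|^{−k/10}`, where `P_{H,F}` draws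
`s ∈ Σ^n` uniformly and sets `b_i = f_i(s_{N_H(i,1)}, …, s_{N_H(i,k)})`. -/
theorem stmt10 : ∃ c : ℝ, 0 < c ∧
    ∀ (n m k : ℕ), 0 < n → 0 < m → 0 < k → k ≤ n →
    ∀ (H : Fin m → Fin n → ZMod 2)
      (hH : ∀ i, (Finset.univ.filter (fun j => H i j ≠ 0)).card = k)
      (Sa Γa : Type) [Fintype Sa] [Fintype Γa] [Nonempty Sa] [Nonempty Γa]
      (S : Set (Fin m → Γa)),
      1 - 2 * Real.exp (-(c * (Fintype.card Sa : ℝ) ^ ((4 * (k : ℝ)) / 5) / (m : ℝ))) ≤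
        (Nat.card {f : Fin m → (Fin k → Sa) → Γa //
            |(Nat.card {s : Fin n → Sa //
                  (fun i => f i (fun j => s (nbr (H i) (hH i) j))) ∈ S} : ℝ) /
                (Nat.card (Fin n → Sa) : ℝ) -
              (Nat.card S : ℝ) / (Fintype.card Γa : ℝ) ^ m| <
              (Fintype.card Sa : ℝ) ^ (-(k : ℝ) / 10)} : ℝ) /
          (Nat.card (Fin m → (Fin k → Sa) → Γa) : ℝ) := by
  refine ⟨2, two_pos, fun n m k _ _ _ _ H hH Sa Γa _ _ _ _ S => ?_⟩
  have key := HasBoundedDifferences.one_sub_two_mul_exp_le_expect_abs_sub_lt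
    (hasBoundedDifferences_plantedProb (Sa := Sa) H hH S)
    (ε := (Fintype.card Sa : ℝ) ^ (-(k : ℝ) / 10)) (by positivity)
  have hsum : ∑ _ : Fin m × (Fin k → Sa), (((Fintype.card Sa : ℝ) ^ k)⁻¹) ^ 2
      = m * ((Fintype.card Sa : ℝ) ^ k)⁻¹ := by
    simp only [inv_pow, sum_const, card_univ, Fintype.card_prod, Fintype.card_fin,
      Fintype.card_pi, prod_const, nsmul_eq_mul, Nat.cast_mul, Nat.cast_pow]
    field_simp
  rw [expect_plantedProb, hsum, neg_mul, neg_div, two_mul_rpow_sq_div_eq (by positivity)] at key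
  convert key using 3
  rw [natCard_subtype_div_natCard]
  refine Fintype.expect_equiv (Equiv.curry _ _ _).symm _ _ fun f => ?_
  rw [natCard_subtype_div_natCard]
  rfl
end

section
/- Let m' be a positive integer, let p ∈ (0, 1), let Q be the distribution on {0,1}^{m'} whose coordinates are i.i.d. Bernoulli(p), and let P be any distribution on {0,1}^{m'}. Define φ(0) = −√(p/(1−p)) and φ(1) = √((1−p)/p), and write Y^φ for the vector obtained by applying φ to each coordinate of Y. For an integer 1 ≤ D ≤ m', let c be the real vector indexed by the nonempty subsets S ⊆ [m'] with |S| ≤ D, given by c_S = E_{Y∼P}[ ∏_{i∈S} φ(Y_i) ]. Then the supremum, over all real multilinear polynomials g in m' variables of degree at most D satisfying E_{Y∼Q}[g(Y^φ)] = 0 and E_{Y∼Q}[g(Y^φ)^2] > 0, of E_{Y∼P}[g(Y^φ)] / √(E_{Y∼Q}[g(Y^φ)^2]) equals ‖c‖_2 (the Euclidean norm of c). In particular, if ‖c‖_2 ≤ ε then every such g has E_{Y∼P}[g(Y^φ)] / √(E_{Y∼Q}[g(Y^φ)^2]) ≤ ε. -/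
open Finset

/-- The normalization map: `φ(0) = −√(p/(1−p))`, `φ(1) = √((1−p)/p)`. -/
noncomputable def phiB (p : ℝ) : Bool → ℝ :=
  fun b => if b then Real.sqrt ((1 - p) / p) else -Real.sqrt (p / (1 - p))

/-- Mass function of `Q`: the coordinates are i.i.d. `Bernoulli(p)`. -/
noncomputable def qMass (m' : ℕ) (p : ℝ) (y : Fin m' → Bool) : ℝ :=
  ∏ i, if y i then p else 1 - p

/-- The multilinear polynomial with coefficient vector `g` (indexed by subsets of
the variables; its degree is at most `D` iff `g S = 0` whenever `|S| > D`),
evaluated at the normalized vector `Y^φ = (φ(y_i))_i`. -/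
noncomputable def gEval (m' : ℕ) (p : ℝ) (g : Finset (Fin m') → ℝ)
    (y : Fin m' → Bool) : ℝ :=
  ∑ S : Finset (Fin m'), g S * ∏ i ∈ S, phiB p (y i)

/-- `E_{Y∼Q}[g(Y^φ)]`. -/
noncomputable def EQval (m' : ℕ) (p : ℝ) (g : Finset (Fin m') → ℝ) : ℝ :=
  ∑ y : Fin m' → Bool, qMass m' p y * gEval m' p g y

/-- `E_{Y∼Q}[g(Y^φ)²]`. -/
noncomputable def EQsq (m' : ℕ) (p : ℝ) (g : Finset (Fin m') → ℝ) : ℝ :=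
  ∑ y : Fin m' → Bool, qMass m' p y * (gEval m' p g y) ^ 2

/-- `E_{Y∼P}[g(Y^φ)]` for a distribution with mass function `Pm`. -/
noncomputable def EPval (m' : ℕ) (p : ℝ) (Pm : (Fin m' → Bool) → ℝ)
    (g : Finset (Fin m') → ℝ) : ℝ :=
  ∑ y : Fin m' → Bool, Pm y * gEval m' p g y

open scoped Classical in
/-- The vector `c`, indexed by nonempty subsets `S` of size at most `D`, with
`c_S = E_{Y∼P}[∏_{i∈S} φ(Y_i)]`; `cNorm` is its Euclidean norm. -/
noncomputable def cNorm (m' : ℕ) (p : ℝ) (Pm : (Fin m' → Bool) → ℝ) (D : ℕ) : ℝ :=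
  Real.sqrt (∑ S ∈ Finset.univ.filter
      (fun S : Finset (Fin m') => S.Nonempty ∧ S.card ≤ D),
    (∑ y : Fin m' → Bool, Pm y * ∏ i ∈ S, phiB p (y i)) ^ 2)

/-! Under `Q` the variables `φ(Y_i)` are independent with mean `0` and variance `1`, so the
characters `χ_S(y) = ∏_{i∈S} φ(y_i)` are orthonormal in `L²(Q)`. In these coordinates
`E_Q[g] = g_∅`, `E_Q[g²] = ∑ g_S²` and `E_P[g] = ∑ g_S c_S`, so by Cauchy–Schwarz the ratio is at
most `‖c‖₂`, with equality for `g_S = c_S` on the nonempty `S` with `|S| ≤ D` (or for a degree-one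
monomial when `c = 0`). -/

noncomputable def phiMoment (m' : ℕ) (p : ℝ) (Pm : (Fin m' → Bool) → ℝ) (S : Finset (Fin m')) :
    ℝ :=
  ∑ y, Pm y * ∏ i ∈ S, phiB p (y i)

section Walsh

variable {m' : ℕ} {p : ℝ}

theorem phiB_mean (hp0 : 0 < p) (hp1 : p < 1) :
    p * phiB p true + (1 - p) * phiB p false = 0 := by
  have hq : 0 < 1 - p := by linarith
  simp only [phiB, if_true, Bool.false_eq_true, if_false, Real.sqrt_div hq.le,
    Real.sqrt_div hp0.le]
  field_simp
  rw [Real.sq_sqrt hp0.le, Real.sq_sqrt hq.le]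
  ring

theorem phiB_sq_mean (hp0 : 0 < p) (hp1 : p < 1) :
    p * phiB p true ^ 2 + (1 - p) * phiB p false ^ 2 = 1 := by
  have hq : 0 < 1 - p := by linarith
  simp only [phiB, if_true, Bool.false_eq_true, if_false, neg_sq,
    Real.sq_sqrt (div_pos hq hp0).le, Real.sq_sqrt (div_pos hp0 hq).le]
  field_simp
  ring

theorem sum_bool_mul_ite_phiB_mul_ite_phiB (hp0 : 0 < p) (hp1 : p < 1)
    (s t : Prop) [Decidable s] [Decidable t] :
    ∑ b : Bool, (if b then p else 1 - p) *
      ((if s then phiB p b else 1) * (if t then phiB p b else 1)) = if (s ↔ t) then 1 else 0 := by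
  have h1 := phiB_mean hp0 hp1
  have h2 := phiB_sq_mean hp0 hp1
  rw [Fintype.sum_bool]
  by_cases hs : s <;> by_cases ht : t <;> simp [hs, ht] <;>
    first | linear_combination h2 | linear_combination h1

theorem sum_qMass_mul_prod_phiB_mul_prod_phiB (hp0 : 0 < p) (hp1 : p < 1)
    (S T : Finset (Fin m')) :
    ∑ y : Fin m' → Bool, qMass m' p y *
      ((∏ i ∈ S, phiB p (y i)) * ∏ i ∈ T, phiB p (y i)) = if S = T then 1 else 0 := by
  have hfactor : ∀ y : Fin m' → Bool,
      qMass m' p y * ((∏ i ∈ S, phiB p (y i)) * ∏ i ∈ T, phiB p (y i)) =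
        ∏ i, (if y i then p else 1 - p) *
          ((if i ∈ S then phiB p (y i) else 1) * (if i ∈ T then phiB p (y i) else 1)) := by
    intro y
    simp only [qMass, Finset.prod_mul_distrib, Finset.prod_ite_mem, Finset.univ_inter]
  simp_rw [hfactor]
  rw [← Fintype.prod_sum fun (i : Fin m') (b : Bool) => (if b then p else 1 - p) *
    ((if i ∈ S then phiB p b else 1) * (if i ∈ T then phiB p b else 1))]
  simp only [sum_bool_mul_ite_phiB_mul_ite_phiB hp0 hp1, Fintype.prod_boole, ← Finset.ext_iff]

theorem sum_qMass_mul_prod_phiB (hp0 : 0 < p) (hp1 : p < 1) (S : Finset (Fin m')) :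
    ∑ y : Fin m' → Bool, qMass m' p y * ∏ i ∈ S, phiB p (y i) = if S = ∅ then 1 else 0 := by
  simpa using sum_qMass_mul_prod_phiB_mul_prod_phiB hp0 hp1 S ∅

theorem EPval_eq_sum (Pm : (Fin m' → Bool) → ℝ) (g : Finset (Fin m') → ℝ) :
    EPval m' p Pm g = ∑ S, g S * phiMoment m' p Pm S := by
  simp only [EPval, gEval, phiMoment, Finset.mul_sum]
  rw [Finset.sum_comm]
  exact Finset.sum_congr rfl fun S _ => Finset.sum_congr rfl fun y _ => by ring

theorem EQval_eq (hp0 : 0 < p) (hp1 : p < 1) (g : Finset (Fin m') → ℝ) :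
    EQval m' p g = g ∅ := by
  change EPval m' p (qMass m' p) g = g ∅
  simp [EPval_eq_sum, phiMoment, sum_qMass_mul_prod_phiB hp0 hp1]

theorem EQsq_eq (hp0 : 0 < p) (hp1 : p < 1) (g : Finset (Fin m') → ℝ) :
    EQsq m' p g = ∑ S, g S ^ 2 := by
  have hexpand : ∀ y, gEval m' p g y ^ 2 = ∑ S, ∑ T,
      g S * g T * ((∏ i ∈ S, phiB p (y i)) * ∏ i ∈ T, phiB p (y i)) := by
    intro y
    rw [gEval, sq, Finset.sum_mul_sum]
    exact Finset.sum_congr rfl fun S _ => Finset.sum_congr rfl fun T _ => by ring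
  calc EQsq m' p g
      = ∑ S, ∑ T, g S * g T * ∑ y, qMass m' p y *
          ((∏ i ∈ S, phiB p (y i)) * ∏ i ∈ T, phiB p (y i)) := by
        simp only [EQsq, hexpand, Finset.mul_sum]
        rw [Finset.sum_comm]
        refine Finset.sum_congr rfl fun S _ => ?_
        rw [Finset.sum_comm]
        exact Finset.sum_congr rfl fun T _ => Finset.sum_congr rfl fun y _ => by ring
    _ = ∑ S, g S ^ 2 := by
        simp [sum_qMass_mul_prod_phiB_mul_prod_phiB hp0 hp1, sq]

end Walsh

def degreeSupport (m' D : ℕ) : Finset (Finset (Fin m')) :=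
  Finset.univ.filter fun S => S.Nonempty ∧ S.card ≤ D

def normalizedCorrelations (m' : ℕ) (p : ℝ) (Pm : (Fin m' → Bool) → ℝ) (D : ℕ) : Set ℝ :=
  {ratio | ∃ g : Finset (Fin m') → ℝ,
    (∀ S : Finset (Fin m'), D < S.card → g S = 0) ∧
    EQval m' p g = 0 ∧ 0 < EQsq m' p g ∧
    ratio = EPval m' p Pm g / Real.sqrt (EQsq m' p g)}

section Extremal

variable {m' D : ℕ} {p : ℝ} {Pm : (Fin m' → Bool) → ℝ} {g : Finset (Fin m') → ℝ}

theorem cNorm_eq :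
    cNorm m' p Pm D = Real.sqrt (∑ S ∈ degreeSupport m' D, phiMoment m' p Pm S ^ 2) := rfl

theorem empty_notMem_degreeSupport : ∅ ∉ degreeSupport m' D := by
  simp [degreeSupport]

theorem singleton_mem_degreeSupport (hD : 1 ≤ D) (i : Fin m') : {i} ∈ degreeSupport m' D := by
  simp [degreeSupport, hD]

theorem eq_zero_of_notMem_degreeSupport (hdeg : ∀ S : Finset (Fin m'), D < S.card → g S = 0)
    (hempty : g ∅ = 0) {S : Finset (Fin m')} (hS : S ∉ degreeSupport m' D) : g S = 0 := by
  simp only [degreeSupport, Finset.mem_filter, Finset.mem_univ, true_and, not_and, not_le] at hS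
  obtain rfl | hne := S.eq_empty_or_nonempty
  · exact hempty
  · exact hdeg S (hS hne)

theorem EPval_eq_sum_degreeSupport (hsupp : ∀ S ∉ degreeSupport m' D, g S = 0) :
    EPval m' p Pm g = ∑ S ∈ degreeSupport m' D, g S * phiMoment m' p Pm S := by
  rw [EPval_eq_sum]
  refine (Finset.sum_subset (Finset.subset_univ _) fun S _ hS => ?_).symm
  rw [hsupp S hS, zero_mul]

theorem EQsq_eq_sum_degreeSupport (hp0 : 0 < p) (hp1 : p < 1)
    (hsupp : ∀ S ∉ degreeSupport m' D, g S = 0) :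
    EQsq m' p g = ∑ S ∈ degreeSupport m' D, g S ^ 2 := by
  rw [EQsq_eq hp0 hp1]
  refine (Finset.sum_subset (Finset.subset_univ _) fun S _ hS => ?_).symm
  rw [hsupp S hS, sq, zero_mul]

theorem EPval_le_cNorm_mul (hp0 : 0 < p) (hp1 : p < 1)
    (hdeg : ∀ S : Finset (Fin m'), D < S.card → g S = 0) (hmean : EQval m' p g = 0) :
    EPval m' p Pm g ≤ cNorm m' p Pm D * Real.sqrt (EQsq m' p g) := by
  rw [EQval_eq hp0 hp1] at hmean
  rw [EPval_eq_sum_degreeSupport fun S => eq_zero_of_notMem_degreeSupport hdeg hmean,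
    cNorm_eq, mul_comm]
  calc ∑ S ∈ degreeSupport m' D, g S * phiMoment m' p Pm S
      ≤ Real.sqrt (∑ S ∈ degreeSupport m' D, g S ^ 2) *
          Real.sqrt (∑ S ∈ degreeSupport m' D, phiMoment m' p Pm S ^ 2) :=
        Real.sum_mul_le_sqrt_mul_sqrt _ _ _
    _ ≤ Real.sqrt (EQsq m' p g) *
          Real.sqrt (∑ S ∈ degreeSupport m' D, phiMoment m' p Pm S ^ 2) := by
        rw [EQsq_eq hp0 hp1]
        gcongr
        exact Finset.subset_univ _

theorem mem_normalizedCorrelations (hp0 : 0 < p) (hp1 : p < 1)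
    (hsupp : ∀ S ∉ degreeSupport m' D, g S = 0) (hpos : 0 < EQsq m' p g) :
    EPval m' p Pm g / Real.sqrt (EQsq m' p g) ∈ normalizedCorrelations m' p Pm D := by
  refine ⟨g, fun S hS => hsupp S ?_, ?_, hpos, rfl⟩
  · simp [degreeSupport, hS]
  · rw [EQval_eq hp0 hp1, hsupp ∅ empty_notMem_degreeSupport]

theorem cNorm_mem_normalizedCorrelations (hm' : 0 < m') (hp0 : 0 < p) (hp1 : p < 1)
    (hD : 1 ≤ D) : cNorm m' p Pm D ∈ normalizedCorrelations m' p Pm D := by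
  rw [cNorm_eq]
  rcases (Finset.sum_nonneg fun S _ => sq_nonneg _ :
      0 ≤ ∑ S ∈ degreeSupport m' D, phiMoment m' p Pm S ^ 2).eq_or_lt with hzero | hpos
  · -- here `g = c` would have `E_Q[g²] = 0`, but a degree-one monomial has ratio `0`
    have hS₀ : {⟨0, hm'⟩} ∈ degreeSupport m' D := singleton_mem_degreeSupport hD _
    have hcS₀ : phiMoment m' p Pm {⟨0, hm'⟩} = 0 := by
      simpa using (Finset.sum_eq_zero_iff_of_nonneg fun S _ => sq_nonneg _).1
        hzero.symm _ hS₀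
    let e : Finset (Fin m') → ℝ := fun S => if S = {⟨0, hm'⟩} then 1 else 0
    have hsupp : ∀ S ∉ degreeSupport m' D, e S = 0 :=
      fun S hS => if_neg (ne_of_mem_of_not_mem hS₀ hS).symm
    have hsq : EQsq m' p e = 1 := by simp [EQsq_eq hp0 hp1, e]
    have hEP : EPval m' p Pm e = 0 := by simp [EPval_eq_sum, e, hcS₀]
    convert mem_normalizedCorrelations hp0 hp1 hsupp (hsq ▸ one_pos) using 1
    rw [← hzero, hEP, Real.sqrt_zero, zero_div]
  · let g : Finset (Fin m') → ℝ :=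
      fun S => if S ∈ degreeSupport m' D then phiMoment m' p Pm S else 0
    have hsupp : ∀ S ∉ degreeSupport m' D, g S = 0 := fun S hS => if_neg hS
    have hsq : EQsq m' p g = ∑ S ∈ degreeSupport m' D, phiMoment m' p Pm S ^ 2 := by
      rw [EQsq_eq_sum_degreeSupport hp0 hp1 hsupp]
      exact Finset.sum_congr rfl fun S hS => by simp [g, hS]
    have hEP : EPval m' p Pm g = ∑ S ∈ degreeSupport m' D, phiMoment m' p Pm S ^ 2 := by
      rw [EPval_eq_sum_degreeSupport hsupp]
      exact Finset.sum_congr rfl fun S hS => by simp [g, hS, sq]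
    convert mem_normalizedCorrelations hp0 hp1 hsupp (hsq ▸ hpos) using 1
    rw [hEP, hsq, Real.div_sqrt]

theorem isGreatest_normalizedCorrelations (hm' : 0 < m') (hp0 : 0 < p) (hp1 : p < 1)
    (hD : 1 ≤ D) : IsGreatest (normalizedCorrelations m' p Pm D) (cNorm m' p Pm D) := by
  refine ⟨cNorm_mem_normalizedCorrelations hm' hp0 hp1 hD, ?_⟩
  rintro _ ⟨g, hdeg, hmean, -, rfl⟩
  exact div_le_of_le_mul₀ (Real.sqrt_nonneg _) (Real.sqrt_nonneg _)
    (EPval_le_cNorm_mul hp0 hp1 hdeg hmean)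

end Extremal

theorem stmt12_general (m' : ℕ) (hm' : 0 < m') (p : ℝ) (hp0 : 0 < p) (hp1 : p < 1)
    (Pm : (Fin m' → Bool) → ℝ)
    (D : ℕ) (hD1 : 1 ≤ D) :
    IsLUB
      {ratio : ℝ | ∃ g : Finset (Fin m') → ℝ,
        (∀ S : Finset (Fin m'), D < S.card → g S = 0) ∧
        EQval m' p g = 0 ∧ 0 < EQsq m' p g ∧
        ratio = EPval m' p Pm g / Real.sqrt (EQsq m' p g)}
      (cNorm m' p Pm D) ∧
    (∀ ε : ℝ, cNorm m' p Pm D ≤ ε →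
      ∀ g : Finset (Fin m') → ℝ,
        (∀ S : Finset (Fin m'), D < S.card → g S = 0) →
        EQval m' p g = 0 → 0 < EQsq m' p g →
        EPval m' p Pm g / Real.sqrt (EQsq m' p g) ≤ ε) := by
  have hmax := isGreatest_normalizedCorrelations (Pm := Pm) hm' hp0 hp1 hD1
  exact ⟨hmax.isLUB, fun ε hε g hdeg hmean hpos => (hmax.2 ⟨g, hdeg, hmean, hpos, rfl⟩).trans hε⟩

/-- For `Q` with i.i.d. `Bernoulli(p)` coordinates and an arbitrary
distribution `P` on `{0,1}^{m'}`, the supremum over all real multilinear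
polynomials `g` of degree at most `D` with `E_Q[g(Y^φ)] = 0` and
`E_Q[g(Y^φ)²] > 0` of `E_P[g(Y^φ)] / √(E_Q[g(Y^φ)²])` equals `‖c‖₂`; in
particular if `‖c‖₂ ≤ ε` then every such `g` has ratio at most `ε`. -/
theorem stmt12 (m' : ℕ) (hm' : 0 < m') (p : ℝ) (hp0 : 0 < p) (hp1 : p < 1)
    (Pm : (Fin m' → Bool) → ℝ) (hPnn : ∀ y, 0 ≤ Pm y)
    (hPsum : ∑ y : Fin m' → Bool, Pm y = 1)
    (D : ℕ) (hD1 : 1 ≤ D) (hDm : D ≤ m') :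
    IsLUB
      {ratio : ℝ | ∃ g : Finset (Fin m') → ℝ,
        (∀ S : Finset (Fin m'), D < S.card → g S = 0) ∧
        EQval m' p g = 0 ∧ 0 < EQsq m' p g ∧
        ratio = EPval m' p Pm g / Real.sqrt (EQsq m' p g)}
      (cNorm m' p Pm D) ∧
    (∀ ε : ℝ, cNorm m' p Pm D ≤ ε →
      ∀ g : Finset (Fin m') → ℝ,
        (∀ S : Finset (Fin m'), D < S.card → g S = 0) →
        EQval m' p g = 0 → 0 < EQsq m' p g →
        EPval m' p Pm g / Real.sqrt (EQsq m' p g) ≤ ε) :=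
  stmt12_general m' hm' p hp0 hp1 Pm D hD1
end

section
/- Let H be an (m, n, k)-matrix that is a (γ, t)-expander, let Σ be a finite alphabet with |Σ| ≥ 1, and let s be uniform in Σ^n. Let S be a set of tuples of the form ((j_1, σ_1), …, (j_k, σ_k)), where (j_1, …, j_k) = (N_H(i,1), …, N_H(i,k)) for some row i of H and σ_ℓ ∈ Σ, with 1 ≤ |S| ≤ t. Then Pr_s[ for every tuple in S and every ℓ ∈ [k], σ_ℓ = s_{j_ℓ} ] ≤ |Σ|^{−γ·k·|S|}. -/
/-!
If no assignment satisfies all constraints in `S`, the probability is `0`. Otherwise, if `s₀`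
does, each tuple of `S` is determined by its index vector `J` (its values are `s₀ ∘ J`), so the
tuples of `S` come from `|S|` distinct rows of `H`. Every satisfying assignment is pinned down on
the union `U` of the supports of those rows, so at most `|Σ|^(n - |U|)` of the `|Σ|^n`
assignments satisfy `S`, and expansion gives `|U| ≥ γ·k·|S|`.
-/

open Finset

section Constraints

variable {κ ν α : Type*}

lemma injOn_fst_of_forall_apply_eq {S : Set ((κ → ν) × (κ → α))} {s : ν → α}
    (hs : ∀ e ∈ S, ∀ ℓ, e.2 ℓ = s (e.1 ℓ)) : Set.InjOn Prod.fst S := by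
  intro e he e' he' hfst
  refine Prod.ext hfst (funext fun ℓ => ?_)
  rw [hs e he ℓ, hs e' he' ℓ, hfst]

lemma eq_of_forall_apply_eq_of_eqOn_compl {S : Set ((κ → ν) × (κ → α))} {U : Set ν}
    (hU : ∀ j ∈ U, ∃ e ∈ S, ∃ ℓ, e.1 ℓ = j) {s s' : ν → α}
    (hs : ∀ e ∈ S, ∀ ℓ, e.2 ℓ = s (e.1 ℓ)) (hs' : ∀ e ∈ S, ∀ ℓ, e.2 ℓ = s' (e.1 ℓ))
    (hcompl : ∀ j ∉ U, s j = s' j) : s = s' := by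
  funext j
  by_cases hj : j ∈ U
  · obtain ⟨e, he, ℓ, rfl⟩ := hU j hj
    rw [← hs e he ℓ, ← hs' e he ℓ]
  · exact hcompl j hj

end Constraints

section Counting

variable {ν α : Type*} [Fintype ν] [DecidableEq ν] [Fintype α]

lemma card_subtype_le_pow_of_eqOn_compl {P : (ν → α) → Prop} (U : Finset ν)
    (hP : ∀ s s', P s → P s' → (∀ j ∉ U, s j = s' j) → s = s') :
    Nat.card {s // P s} ≤ Fintype.card α ^ (Fintype.card ν - #U) := by
  have hinj : Function.Injective fun s : {s // P s} => fun j : (Uᶜ : Finset ν) => s.1 j := by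
    rintro ⟨s, hs⟩ ⟨s', hs'⟩ heq
    exact Subtype.ext <| hP s s' hs hs' fun j hj => congrFun heq ⟨j, Finset.mem_compl.2 hj⟩
  calc Nat.card {s // P s} ≤ Nat.card ((Uᶜ : Finset ν) → α) :=
        Nat.card_le_card_of_injective _ hinj
    _ = Fintype.card α ^ (Fintype.card ν - #U) := by
        rw [Nat.card_eq_fintype_card, Fintype.card_fun, Fintype.card_coe, Finset.card_compl]

lemma card_subtype_div_card_le_rpow_of_eqOn_compl [Nonempty α] {P : (ν → α) → Prop} (U : Finset ν)
    (hP : ∀ s s', P s → P s' → (∀ j ∉ U, s j = s' j) → s = s') :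
    (Nat.card {s // P s} : ℝ) / Nat.card (ν → α) ≤ (Fintype.card α : ℝ) ^ (-(#U : ℝ)) := by
  have hcount : (Nat.card {s // P s} : ℝ) ≤ (Fintype.card α : ℝ) ^ (Fintype.card ν - #U) := by
    exact_mod_cast card_subtype_le_pow_of_eqOn_compl U hP
  set q : ℝ := (Fintype.card α : ℝ)
  have hq : 0 < q := by positivity
  have hUν : #U ≤ Fintype.card ν := Finset.card_le_univ U
  have hden : (Nat.card (ν → α) : ℝ) = q ^ Fintype.card ν := by
    rw [Nat.card_eq_fintype_card, Fintype.card_fun, Nat.cast_pow]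
  rw [hden, div_le_iff₀ (by positivity), Real.rpow_neg hq.le, Real.rpow_natCast,
    ← Nat.sub_add_cancel hUν, pow_add, ← mul_assoc, mul_right_comm,
    inv_mul_cancel₀ (by positivity), one_mul]
  exact hcount

end Counting

lemma exists_nbr_eq {n k : ℕ} (r : Fin n → ZMod 2)
    (hr : (Finset.univ.filter (fun c => r c ≠ 0)).card = k) {j : Fin n}
    (hj : r j ≠ 0) : ∃ ℓ : Fin k, nbr r hr ℓ = j := by
  obtain ⟨ℓ, hℓ⟩ := (Finset.orderIsoOfFin _ hr).surjective ⟨j, by simpa using hj⟩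
  exact ⟨ℓ, congrArg Subtype.val hℓ⟩

lemma orWeight_eq_card_filter {ρ ν : Type*} [Fintype ν] (G : ρ → ν → ZMod 2) (T : Finset ρ)
    [DecidablePred fun j => ∃ i ∈ T, G i j ≠ 0] :
    orWeight G T = #(Finset.univ.filter fun j => ∃ i ∈ T, G i j ≠ 0) := by
  rw [orWeight, Nat.card_eq_fintype_card, Fintype.card_subtype]

lemma exists_rows_card_eq_of_forall_eq_nbr {m n k : ℕ} {α : Type*} {H : Fin m → Fin n → ZMod 2}
    (hH : ∀ i, (Finset.univ.filter (fun j => H i j ≠ 0)).card = k)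
    {S : Finset ((Fin k → Fin n) × (Fin k → α))} (hSnbr : ∀ e ∈ S, ∃ i, e.1 = nbr (H i) (hH i))
    (hSinj : Set.InjOn Prod.fst (S : Set ((Fin k → Fin n) × (Fin k → α)))) :
    ∃ T : Finset (Fin m), #T = #S ∧ ∀ i ∈ T, ∀ j, H i j ≠ 0 → ∃ e ∈ S, ∃ ℓ, e.1 ℓ = j := by
  classical
  obtain ⟨T, -, hTinj, hTimage⟩ := Finset.exists_subset_injOn_image_eq_of_surjOn
    (f := fun i => nbr (H i) (hH i)) Set.univ (S.image Prod.fst) fun J hJ => by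
      obtain ⟨e, he, rfl⟩ := Finset.mem_image.1 hJ
      obtain ⟨i, hi⟩ := hSnbr e he
      exact ⟨i, trivial, hi.symm⟩
  refine ⟨T, ?_, fun i hiT j hij => ?_⟩
  · rw [← Finset.card_image_of_injOn hTinj, hTimage, Finset.card_image_of_injOn hSinj]
  · obtain ⟨ℓ, rfl⟩ := exists_nbr_eq (H i) (hH i) hij
    obtain ⟨e, he, hei⟩ := Finset.mem_image.1 (hTimage ▸ Finset.mem_image_of_mem _ hiT)
    exact ⟨e, he, ℓ, by rw [hei]⟩

/-- Let `H` be an `(m,n,k)`-matrix that is a `(γ,t)`-expander, `Σ`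
a nonempty finite alphabet, and `s` uniform in `Σ^n`.  Let `S` be a set of tuples
`((j_1, σ_1), …, (j_k, σ_k))` — encoded as pairs `(J, σ)` with
`J = (N_H(i,1), …, N_H(i,k))` for some row `i` — with `1 ≤ |S| ≤ t`.  Then the
probability (over uniform `s`) that every tuple of `S` satisfies `σ_ℓ = s_{j_ℓ}`
for all `ℓ` is at most `|Σ|^{−γ·k·|S|}`. -/
theorem stmt14 (m n k t : ℕ) (γ : ℝ) (H : Fin m → Fin n → ZMod 2)
    (hH : ∀ i, (Finset.univ.filter (fun j => H i j ≠ 0)).card = k)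
    (hexp : IsExpander H γ k t)
    (Sa : Type*) [Fintype Sa] [Nonempty Sa]
    (S : Finset ((Fin k → Fin n) × (Fin k → Sa)))
    (hSnbr : ∀ e ∈ S, ∃ i, e.1 = nbr (H i) (hH i))
    (hS1 : 1 ≤ S.card) (hSt : S.card ≤ t) :
    (Nat.card {s : Fin n → Sa // ∀ e ∈ S, ∀ ℓ, e.2 ℓ = s (e.1 ℓ)} : ℝ) /
      (Nat.card (Fin n → Sa) : ℝ) ≤
    (Fintype.card Sa : ℝ) ^ (-(γ * (k : ℝ) * (S.card : ℝ))) := by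
  rcases isEmpty_or_nonempty {s : Fin n → Sa // ∀ e ∈ S, ∀ ℓ, e.2 ℓ = s (e.1 ℓ)} with
    _ | ⟨s₀, hs₀⟩
  · rw [Nat.card_of_isEmpty, Nat.cast_zero, zero_div]
    positivity
  obtain ⟨T, hTcard, hTcover⟩ :=
    exists_rows_card_eq_of_forall_eq_nbr hH hSnbr (injOn_fst_of_forall_apply_eq hs₀)
  set U := Finset.univ.filter fun j => ∃ i ∈ T, H i j ≠ 0
  have hexpT : γ * k * #S ≤ #U := by
    have := hexp T (Finset.card_pos.1 (hTcard ▸ hS1)) (hTcard ▸ hSt)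
    rwa [hTcard, orWeight_eq_card_filter] at this
  have hcovered : ∀ j ∈ (U : Set (Fin n)),
      ∃ e ∈ (S : Set ((Fin k → Fin n) × (Fin k → Sa))), ∃ ℓ, e.1 ℓ = j := fun j hj =>
    (Finset.mem_filter.1 hj).2.elim fun i ⟨hiT, hij⟩ => hTcover i hiT j hij
  calc _ ≤ (Fintype.card Sa : ℝ) ^ (-(#U : ℝ)) :=
        card_subtype_div_card_le_rpow_of_eqOn_compl U fun _ _ hs hs' =>
          eq_of_forall_apply_eq_of_eqOn_compl hcovered hs hs'
    _ ≤ _ := Real.rpow_le_rpow_of_exponent_le (by exact_mod_cast Fintype.card_pos) (by linarith)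
end
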